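/- arXiv:2303.08539 — 5 statements merged into one kernel-verified Lean document; each statement's English description precedes it below -/
import Mathlib

section
/- Let h : [0,1] → [0,1] be an orientation-preserving C¹ diffeomorphism, and let f and g be C² NS-maps on [0,1] such that ln α and ln β are rationally independent, where α = f'(0) and β = g'(0). Let I = [a,b] and J = [c,d] be nondegenerate closed intervals contained in (0,1). Then there exist a constant ρ > 0 and infinitely many pairs of positive integers (k_n, l_n) such that for every n: |f^{k_n}(I) ∩ h^{-1}(g^{l_n}(J))| ≥ ρ · (f^{k_n}(b) − f^{k_n + 1}(b)) and |h(f^{k_n}(I)) ∩ g^{l_n}(J)| ≥ ρ · (g^{l_n}(d) − g^{l_n + 1}(d)), where |·| denotes the length (Lebesgue measure) of the set. -/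
/-!
For a `C²` NS-map `φ` with `α = φ'(0)`, the rescaled orbits `φ^k(x) / α^k` converge to a positive
limit `c(x)` that is strictly increasing in `x` (Koenigs linearization): the consecutive ratios of
`(φ^k(y) - φ^k(x)) / α^k` are `φ'(ξ_k) / α = 1 + O(φ^k(y))`, and the orbit of `y` is summable.
So `h(f^k(I)) ≈ α^k · h'(0) · [c(a), c(b)]` and `g^l(J) ≈ β^l · [c(c), c(d)]`. Since `ln α / ln β`
is irrational, `β^l / α^k` converges to any prescribed `T > 0` along suitable `k, l → ∞`; for
`T = h'(0) c(b) / c(d)` the two intervals overlap in an interval of length `≍ α^k ≍ β^l`. That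
length dominates both fundamental domains, and, divided by the Lipschitz constant of `h`, bounds
the length of the `h`-preimage of the overlap from below.
-/

open Set Filter MeasureTheory Topology

open scoped NNReal

def RatIndep (u v : ℝ) : Prop :=
  ∀ r s : ℚ, (r : ℝ) * u + (s : ℝ) * v = 0 → r = 0 ∧ s = 0

def IsNSMap (φ : ℝ → ℝ) : Prop :=
  Set.BijOn φ (Set.Icc 0 1) (Set.Icc 0 1) ∧
  φ 0 = 0 ∧ φ 1 = 1 ∧
  (∀ t ∈ Set.Icc (0 : ℝ) 1, derivWithin φ (Set.Icc 0 1) t ≠ 0) ∧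
  0 < derivWithin φ (Set.Icc 0 1) 0 ∧ derivWithin φ (Set.Icc 0 1) 0 < 1 ∧
  1 < derivWithin φ (Set.Icc 0 1) 1 ∧
  ∀ t ∈ Set.Ioo (0 : ℝ) 1, φ t < t

section Calculus

variable {F : ℝ → ℝ} {a b : ℝ}

theorem ContDiffOn.hasDerivAt_derivWithin_Icc (hF : ContDiffOn ℝ 1 F (Icc a b)) {x : ℝ}
    (hx : x ∈ Ioo a b) : HasDerivAt F (derivWithin F (Icc a b) x) x :=
  (hF.differentiableOn one_ne_zero x (Ioo_subset_Icc_self hx)).hasDerivWithinAt.hasDerivAt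
    (Icc_mem_nhds hx.1 hx.2)

theorem ContDiffOn.exists_sub_eq_derivWithin_Icc_mul (hF : ContDiffOn ℝ 1 F (Icc a b))
    {u v : ℝ} (hau : a ≤ u) (huv : u < v) (hvb : v ≤ b) :
    ∃ ξ ∈ Ioo u v, F v - F u = derivWithin F (Icc a b) ξ * (v - u) := by
  obtain ⟨ξ, hξ, hslope⟩ := exists_hasDerivAt_eq_slope F (derivWithin F (Icc a b)) huv
    (hF.continuousOn.mono (Icc_subset_Icc hau hvb))
    (fun x hx => hF.hasDerivAt_derivWithin_Icc (Ioo_subset_Ioo hau hvb hx))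
  exact ⟨ξ, hξ, by rw [hslope, div_mul_cancel₀ _ (sub_ne_zero.2 huv.ne')]⟩

theorem ContDiffOn.strictMonoOn_Icc (hF : ContDiffOn ℝ 1 F (Icc a b))
    (hpos : ∀ t ∈ Icc a b, 0 < derivWithin F (Icc a b) t) : StrictMonoOn F (Icc a b) := by
  intro u hu v hv huv
  obtain ⟨ξ, hξ, hmvt⟩ := hF.exists_sub_eq_derivWithin_Icc_mul hu.1 huv hv.2
  have := mul_pos (hpos ξ ⟨hu.1.trans hξ.1.le, hξ.2.le.trans hv.2⟩) (sub_pos.2 huv)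
  linarith

theorem ContDiffOn.exists_lipschitzOnWith_Icc (hab : a < b) (hF : ContDiffOn ℝ 1 F (Icc a b)) :
    ∃ K, LipschitzOnWith K F (Icc a b) := by
  obtain ⟨C, hC⟩ := isCompact_Icc.exists_bound_of_continuousOn
    (hF.continuousOn_derivWithin (uniqueDiffOn_Icc hab) le_rfl)
  refine ⟨C.toNNReal, (convex_Icc a b).lipschitzOnWith_of_nnnorm_derivWithin_le
    (hF.differentiableOn one_ne_zero) fun x hx => ?_⟩
  rw [← NNReal.coe_le_coe, coe_nnnorm]
  exact (hC x hx).trans (le_max_left _ _)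

theorem HasDerivWithinAt.tendsto_div_self {F' : ℝ} {s : Set ℝ} (hF : HasDerivWithinAt F F' s 0)
    (hF0 : F 0 = 0) {ι : Type*} {l : Filter ι} {u : ι → ℝ} (hu : Tendsto u l (𝓝[s \ {0}] 0)) :
    Tendsto (fun i => F (u i) / u i) l (𝓝 F') := by
  refine ((hasDerivWithinAt_iff_tendsto_slope.1 hF).comp hu).congr fun i => ?_
  simp [slope_def_field, hF0]

theorem HasDerivWithinAt.tendsto_comp_div {F' : ℝ} {s : Set ℝ} (hF : HasDerivWithinAt F F' s 0)
    (hF0 : F 0 = 0) {ι : Type*} {l : Filter ι} {u v : ι → ℝ} {c : ℝ}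
    (hu : Tendsto u l (𝓝[s \ {0}] 0)) (huv : Tendsto (fun i => u i / v i) l (𝓝 c)) :
    Tendsto (fun i => F (u i) / v i) l (𝓝 (F' * c)) := by
  refine ((hF.tendsto_div_self hF0 hu).mul huv).congr' ?_
  filter_upwards [hu self_mem_nhdsWithin] with i hi
  exact div_mul_div_cancel₀ hi.2

end Calculus

theorem exists_pos_tendsto_of_succ_eq_mul {r q : ℕ → ℝ} (hr : 0 < r 0) (hq : ∀ k, 0 < q k)
    (hrq : ∀ k, r (k + 1) = q k * r k) (hsum : Summable fun k => q k - 1) :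
    ∃ c, 0 < c ∧ Tendsto r atTop (𝓝 c) := by
  have hpos : ∀ k, 0 < r k := fun k => by
    induction k with
    | zero => exact hr
    | succ k ih => rw [hrq]; exact mul_pos (hq k) ih
  have hlog : ∀ k, Real.log (r k) = Real.log (r 0) + ∑ i ∈ Finset.range k, Real.log (q i) :=
    fun k => by
    induction k with
    | zero => simp
    | succ k ih =>
      rw [hrq, Real.log_mul (hq k).ne' (hpos k).ne', ih, Finset.sum_range_succ]
      ring
  have hsum_log : Summable fun k => Real.log (q k) := by
    simpa using Real.summable_log_one_add_of_summable hsum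
  refine ⟨Real.exp (Real.log (r 0) + ∑' k, Real.log (q k)), Real.exp_pos _, ?_⟩
  refine ((hsum_log.hasSum.tendsto_sum_nat.const_add _).rexp).congr fun k => ?_
  rw [← hlog, Real.exp_log (hpos k)]

namespace IsNSMap

variable {φ : ℝ → ℝ}

theorem mapsTo_Ioo (hφ : IsNSMap φ) : MapsTo φ (Ioo 0 1) (Ioo 0 1) := by
  obtain ⟨hbij, h0, -, -, -, -, -, hlt⟩ := hφ
  intro x hx
  have hne : φ x ≠ 0 := fun hx0 => hx.1.ne
    (hbij.injOn (left_mem_Icc.2 zero_le_one) (Ioo_subset_Icc_self hx) (h0.trans hx0.symm))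
  exact ⟨(hbij.mapsTo (Ioo_subset_Icc_self hx)).1.lt_of_ne hne.symm, (hlt x hx).trans hx.2⟩

theorem tendsto_iterate_nhdsWithin (hφ : IsNSMap φ) (hc : ContinuousOn φ (Icc 0 1)) {x : ℝ}
    (hx : x ∈ Ioo 0 1) : Tendsto (fun k => φ^[k] x) atTop (𝓝[Icc 0 1 \ {0}] 0) := by
  have hlt : ∀ t ∈ Ioo (0 : ℝ) 1, φ t < t := hφ.2.2.2.2.2.2.2
  have hmem : ∀ k, φ^[k] x ∈ Ioo 0 1 := fun k => hφ.mapsTo_Ioo.iterate k hx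
  have hanti : Antitone fun k => φ^[k] x := antitone_nat_of_succ_le fun k => by
    rw [Function.iterate_succ_apply']
    exact (hlt _ (hmem k)).le
  have hbdd : BddBelow (range fun k => φ^[k] x) := ⟨0, by rintro _ ⟨k, rfl⟩; exact (hmem k).1.le⟩
  have hlim := tendsto_atTop_ciInf hanti hbdd
  set L := ⨅ k, φ^[k] x
  have hL : L = 0 := by
    refine (le_ciInf fun k => (hmem k).1.le).eq_or_lt.elim Eq.symm fun hL => ?_
    have hL1 : L < 1 := (ciInf_le hbdd 0).trans_lt hx.2
    have hfix := isFixedPt_of_tendsto_iterate hlim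
      ((hc L ⟨hL.le, hL1.le⟩).continuousAt (Icc_mem_nhds hL hL1))
    exact absurd hfix (hlt L ⟨hL, hL1⟩).ne
  rw [hL] at hlim
  exact tendsto_nhdsWithin_iff.2 ⟨hlim, Eventually.of_forall fun k =>
    ⟨Ioo_subset_Icc_self (hmem k), (hmem k).1.ne'⟩⟩

theorem derivWithin_pos (hφ : IsNSMap φ) (hφ1 : ContDiffOn ℝ 1 φ (Icc 0 1)) :
    ∀ t ∈ Icc (0 : ℝ) 1, 0 < derivWithin φ (Icc 0 1) t := by
  obtain ⟨-, -, -, hne, hα, -⟩ := hφ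
  intro t ht
  by_contra! hle
  have hsub : uIcc 0 t ⊆ Icc (0 : ℝ) 1 := by rw [uIcc_of_le ht.1]; exact Icc_subset_Icc le_rfl ht.2
  obtain ⟨s, hs, hs0⟩ := intermediate_value_uIcc
    ((hφ1.continuousOn_derivWithin (uniqueDiffOn_Icc one_pos) le_rfl).mono hsub)
    (mem_uIcc.2 (Or.inr ⟨hle, hα.le⟩))
  exact hne s (hsub hs) hs0

theorem summable_iterate (hφ : IsNSMap φ) (hφ1 : ContDiffOn ℝ 1 φ (Icc 0 1)) {x : ℝ}
    (hx : x ∈ Ioo 0 1) : Summable fun k => φ^[k] x := by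
  have hmem : ∀ k, φ^[k] x ∈ Ioo 0 1 := fun k => hφ.mapsTo_Ioo.iterate k hx
  have hα : derivWithin φ (Icc 0 1) 0 < 1 := hφ.2.2.2.2.2.1
  have hderiv := (hφ1.differentiableOn one_ne_zero 0 (left_mem_Icc.2 zero_le_one)).hasDerivWithinAt
  refine summable_of_ratio_test_tendsto_lt_one hα
    (Eventually.of_forall fun k => (hmem k).1.ne') (((hderiv.tendsto_div_self hφ.2.1
      (hφ.tendsto_iterate_nhdsWithin hφ1.continuousOn hx))).congr fun k => ?_)
  rw [Function.iterate_succ_apply', Real.norm_of_nonneg (hmem k).1.le,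
    Real.norm_of_nonneg (hφ.mapsTo_Ioo (hmem k)).1.le]

theorem exists_tendsto_iterate_sub_div_pow (hφ : IsNSMap φ) (hφ2 : ContDiffOn ℝ 2 φ (Icc 0 1))
    {x y : ℝ} (hx : 0 ≤ x) (hxy : x < y) (hy : y < 1) :
    ∃ c, 0 < c ∧ Tendsto (fun k => (φ^[k] y - φ^[k] x) / derivWithin φ (Icc 0 1) 0 ^ k)
      atTop (𝓝 c) := by
  set φ' := derivWithin φ (Icc 0 1)
  have hα : 0 < φ' 0 := hφ.2.2.2.2.1
  have hφ1 : ContDiffOn ℝ 1 φ (Icc 0 1) := hφ2.of_le one_le_two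
  obtain ⟨K, hK⟩ := (hφ2.derivWithin (uniqueDiffOn_Icc one_pos)
    (by norm_num)).exists_lipschitzOnWith_Icc one_pos
  have hxI : ∀ k, φ^[k] x ∈ Icc 0 1 := fun k => hφ.1.mapsTo.iterate k ⟨hx, (hxy.trans hy).le⟩
  have hyI : ∀ k, φ^[k] y ∈ Ioo 0 1 := fun k => hφ.mapsTo_Ioo.iterate k ⟨hx.trans_lt hxy, hy⟩
  have hmono := hφ1.strictMonoOn_Icc (hφ.derivWithin_pos hφ1)
  have hlt : ∀ k, φ^[k] x < φ^[k] y := fun k => by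
    induction k with
    | zero => exact hxy
    | succ k ih =>
      simp only [Function.iterate_succ_apply']
      exact hmono (hxI k) (Ioo_subset_Icc_self (hyI k)) ih
  have hstep : ∀ k, ∃ ξ ∈ Ioo (φ^[k] x) (φ^[k] y),
      φ^[k + 1] y - φ^[k + 1] x = φ' ξ * (φ^[k] y - φ^[k] x) := fun k => by
    simpa only [Function.iterate_succ_apply'] using
      hφ1.exists_sub_eq_derivWithin_Icc_mul (hxI k).1 (hlt k) (hyI k).2.le
  choose ξ hξ hξeq using hstep
  have hξI : ∀ k, ξ k ∈ Icc 0 1 := fun k =>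
    ⟨(hxI k).1.trans (hξ k).1.le, (hξ k).2.le.trans (hyI k).2.le⟩
  refine exists_pos_tendsto_of_succ_eq_mul (q := fun k => φ' (ξ k) / φ' 0)
    (by simpa using sub_pos.2 hxy) (fun k => div_pos (hφ.derivWithin_pos hφ1 _ (hξI k)) hα)
    (fun k => by rw [hξeq, pow_succ]; field_simp) ?_
  refine ((hφ.summable_iterate hφ1 ⟨hx.trans_lt hxy, hy⟩).mul_left (K / φ' 0)).of_norm_bounded
    fun k => ?_
  have hlip := hK.dist_le_mul _ (hξI k) _ (left_mem_Icc.2 zero_le_one)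
  rw [Real.dist_eq, Real.dist_eq, sub_zero, abs_of_nonneg (hξI k).1] at hlip
  rw [Real.norm_eq_abs, div_sub_one hα.ne', abs_div, abs_of_pos hα, div_le_iff₀ hα]
  calc |φ' (ξ k) - φ' 0| ≤ K * ξ k := hlip
    _ ≤ K * φ^[k] y := by gcongr; exact (hξ k).2.le
    _ = K / φ' 0 * φ^[k] y * φ' 0 := by field_simp

theorem exists_tendsto_iterate_div_pow (hφ : IsNSMap φ) (hφ2 : ContDiffOn ℝ 2 φ (Icc 0 1))
    {x y : ℝ} (hx : 0 < x) (hxy : x < y) (hy : y < 1) :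
    ∃ cx cy, 0 < cx ∧ cx < cy ∧
      Tendsto (fun k => φ^[k] x / derivWithin φ (Icc 0 1) 0 ^ k) atTop (𝓝 cx) ∧
      Tendsto (fun k => φ^[k] y / derivWithin φ (Icc 0 1) 0 ^ k) atTop (𝓝 cy) := by
  have hfix : ∀ k, φ^[k] 0 = 0 := Function.iterate_fixed hφ.2.1
  obtain ⟨cx, hcx, hlimx⟩ := hφ.exists_tendsto_iterate_sub_div_pow hφ2 le_rfl hx (hxy.trans hy)
  obtain ⟨cy, -, hlimy⟩ := hφ.exists_tendsto_iterate_sub_div_pow hφ2 le_rfl (hx.trans hxy) hy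
  obtain ⟨cxy, hcxy, hlimxy⟩ := hφ.exists_tendsto_iterate_sub_div_pow hφ2 hx.le hxy hy
  simp only [hfix, sub_zero] at hlimx hlimy
  have hdiff : cy - cx = cxy :=
    tendsto_nhds_unique ((hlimy.sub hlimx).congr fun k => by ring) hlimxy
  exact ⟨cx, cy, hcx, by linarith, hlimx, hlimy⟩

end IsNSMap

theorem exists_nat_int_abs_mul_sub_sub_le {δ : ℝ} (hδ : δ ≠ 0) (y : ℝ) :
    ∃ (i : ℕ) (m : ℤ), |i * δ - y - m| ≤ |δ| := by
  wlog hδ' : 0 < δ generalizing δ y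
  · obtain ⟨i, m, h⟩ := this (neg_ne_zero.2 hδ) (-y)
      (neg_pos.2 (lt_of_le_of_ne (not_lt.1 hδ') hδ))
    refine ⟨i, -m, ?_⟩
    rw [abs_neg, ← abs_neg] at h
    convert h using 2
    push_cast
    ring
  refine ⟨⌈Int.fract y / δ⌉₊, -⌊y⌋, ?_⟩
  have hle := (div_le_iff₀ hδ').1 (Nat.le_ceil (Int.fract y / δ))
  have hlt : (⌈Int.fract y / δ⌉₊ : ℝ) * δ < Int.fract y + δ := by
    have := mul_lt_mul_of_pos_right
      (Nat.ceil_lt_add_one (div_nonneg (Int.fract_nonneg y) hδ'.le)) hδ'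
    rwa [add_mul, div_mul_cancel₀ _ hδ'.ne', one_mul] at this
  rw [abs_of_pos hδ', abs_le, Int.fract] at *
  push_cast
  constructor <;> linarith

theorem Irrational.exists_nat_int_abs_mul_sub_sub_lt {θ : ℝ} (hθ : Irrational θ) (x : ℝ)
    {ε : ℝ} (hε : 0 < ε) (M : ℕ) : ∃ (K : ℕ) (m : ℤ), M ≤ K ∧ |K * θ - x - m| < ε := by
  obtain ⟨n, hn⟩ := exists_nat_one_div_lt hε
  -- Dirichlet: `k * θ` is within `ε` of an integer, and walking along multiples of `k`
  -- moves `K * θ` modulo `1` by steps shorter than `ε`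
  obtain ⟨k, hk, -, hdir⟩ := Real.exists_nat_abs_mul_sub_round_le θ n.succ_pos
  set δ := k * θ - round (k * θ)
  have hδ : δ ≠ 0 := sub_ne_zero.2 ((hθ.natCast_mul hk.ne').ne_int _)
  obtain ⟨i, m, hi⟩ := exists_nat_int_abs_mul_sub_sub_le hδ (x - M * θ)
  refine ⟨M + i * k, m + i * round (k * θ), Nat.le_add_right M _, ?_⟩
  calc |((M + i * k : ℕ) : ℝ) * θ - x - ((m + i * round (k * θ) : ℤ) : ℝ)|
      = |i * δ - (x - M * θ) - m| := by simp only [δ]; push_cast; ring_nf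
    _ ≤ |δ| := hi
    _ < ε := hdir.trans_lt (lt_of_le_of_lt (by gcongr; simp) hn)

theorem Irrational.exists_nat_nat_abs_sub_mul_sub_lt {θ : ℝ} (hθ : Irrational θ) (hθ0 : 0 < θ)
    (w : ℝ) {ε : ℝ} (hε : 0 < ε) (M : ℕ) :
    ∃ k l : ℕ, M ≤ k ∧ M ≤ l ∧ |l - k * θ - w| < ε := by
  obtain ⟨N, hN⟩ := exists_nat_ge ((M + |w| + 1) / θ)
  obtain ⟨k, m, hk, hkm⟩ :=
    hθ.exists_nat_int_abs_mul_sub_sub_lt (-w) (lt_min hε one_pos) (N + M)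
  have hkm' := abs_lt.1 (hkm.trans_le (min_le_right _ _))
  have hNk : (M + |w| + 1 : ℝ) ≤ k * θ := by
    rw [div_le_iff₀ hθ0] at hN
    exact hN.trans (by gcongr; exact_mod_cast (Nat.le_add_right N M).trans hk)
  have hMm : (M : ℤ) ≤ m := by
    have : (M : ℝ) ≤ m := by linarith [neg_abs_le w]
    exact_mod_cast this
  refine ⟨k, m.toNat, (Nat.le_add_left M N).trans hk, by omega, ?_⟩
  rw [show ((m.toNat : ℕ) : ℝ) = m by exact_mod_cast Int.toNat_of_nonneg (by omega)]
  rw [← abs_neg, show -(m - k * θ - w) = k * θ - -w - m by ring]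
  exact hkm.trans_le (min_le_left _ _)

theorem Irrational.exists_tendsto_sub_mul {θ : ℝ} (hθ : Irrational θ) (hθ0 : 0 < θ) (w : ℝ) :
    ∃ k l : ℕ → ℕ, Tendsto k atTop atTop ∧ Tendsto l atTop atTop ∧
      Tendsto (fun n => (l n : ℝ) - k n * θ) atTop (𝓝 w) := by
  choose k l hk hl hkl using fun n : ℕ =>
    hθ.exists_nat_nat_abs_sub_mul_sub_lt hθ0 w (Nat.one_div_pos_of_nat (n := n)) n
  refine ⟨k, l, tendsto_atTop_mono hk tendsto_id, tendsto_atTop_mono hl tendsto_id, ?_⟩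
  have hε : Tendsto (fun n : ℕ => 1 / ((n : ℝ) + 1)) atTop (𝓝 0) :=
    tendsto_one_div_add_atTop_nhds_zero_nat
  have hlower : Tendsto (fun n : ℕ => w - 1 / ((n : ℝ) + 1)) atTop (𝓝 w) := by
    simpa using hε.const_sub w
  have hupper : Tendsto (fun n : ℕ => w + 1 / ((n : ℝ) + 1)) atTop (𝓝 w) := by
    simpa using hε.const_add w
  refine tendsto_of_tendsto_of_tendsto_of_le_of_le hlower hupper (fun n => ?_) (fun n => ?_) <;>
  linarith [abs_lt.1 (hkl n)]

theorem RatIndep.exists_tendsto_pow_div_pow {α β : ℝ} (hind : RatIndep (Real.log α) (Real.log β))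
    (hα0 : 0 < α) (hα1 : α < 1) (hβ0 : 0 < β) (hβ1 : β < 1) {T : ℝ} (hT : 0 < T) :
    ∃ k l : ℕ → ℕ, Tendsto k atTop atTop ∧ Tendsto l atTop atTop ∧
      Tendsto (fun n => β ^ l n / α ^ k n) atTop (𝓝 T) := by
  have hlogα := Real.log_neg hα0 hα1
  have hlogβ := Real.log_neg hβ0 hβ1
  set θ := Real.log α / Real.log β
  have hθ : Irrational θ := by
    rintro ⟨q, hq⟩
    refine one_ne_zero (hind 1 (-q) ?_).1
    push_cast
    rw [hq, neg_mul, div_mul_cancel₀ _ hlogβ.ne]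
    ring
  obtain ⟨k, l, hk, hl, hkl⟩ := hθ.exists_tendsto_sub_mul (div_pos_of_neg_of_neg hlogα hlogβ)
    (Real.log T / Real.log β)
  refine ⟨k, l, hk, hl, ?_⟩
  have hexp := (Real.continuous_exp.tendsto _).comp (hkl.const_mul (Real.log β))
  rw [mul_div_cancel₀ _ hlogβ.ne, Function.comp_def, Real.exp_log hT] at hexp
  refine hexp.congr fun n => ?_
  rw [← Real.exp_log (div_pos (pow_pos hβ0 _) (pow_pos hα0 _)), Real.log_div
    (pow_ne_zero _ hβ0.ne') (pow_ne_zero _ hα0.ne'), Real.log_pow, Real.log_pow]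
  congr 1
  simp only [θ]
  field_simp [hlogβ.ne]

theorem sub_le_toReal_volume_image_inter_image {F G : ℝ → ℝ} {a b c d : ℝ} (hab : a ≤ b)
    (hcd : c ≤ d) (hF : ContinuousOn F (Icc a b)) (hG : ContinuousOn G (Icc c d)) :
    min (F b) (G d) - max (F a) (G c) ≤ (volume (F '' Icc a b ∩ G '' Icc c d)).toReal := by
  have hsub : Icc (max (F a) (G c)) (min (F b) (G d)) ⊆ F '' Icc a b ∩ G '' Icc c d :=
    fun x hx => ⟨intermediate_value_Icc hab hF
        ⟨(le_max_left _ _).trans hx.1, hx.2.trans (min_le_left _ _)⟩,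
      intermediate_value_Icc hcd hG
        ⟨(le_max_right _ _).trans hx.1, hx.2.trans (min_le_right _ _)⟩⟩
  have hfin : volume (F '' Icc a b ∩ G '' Icc c d) ≠ ⊤ :=
    ((measure_mono inter_subset_right).trans_lt
      (isCompact_Icc.image_of_continuousOn hG).measure_lt_top).ne
  calc min (F b) (G d) - max (F a) (G c)
      ≤ (volume (Icc (max (F a) (G c)) (min (F b) (G d)))).toReal := by
        rw [Real.volume_Icc, ENNReal.toReal_ofReal']
        exact le_max_left _ _
    _ ≤ _ := ENNReal.toReal_mono hfin (measure_mono hsub)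

theorem LipschitzOnWith.toReal_volume_image_le {F : ℝ → ℝ} {K : ℝ≥0} {s : Set ℝ}
    (hF : LipschitzOnWith K F s) (hs : volume s ≠ ⊤) :
    (volume (F '' s)).toReal ≤ K * (volume s).toReal := by
  have h := hF.hausdorffMeasure_image_le zero_le_one
  rw [ENNReal.rpow_one, hausdorffMeasure_real] at h
  simpa [ENNReal.toReal_mul] using ENNReal.toReal_mono (ENNReal.mul_ne_top ENNReal.coe_ne_top hs) h

theorem eventually_nhds_zero_eventually_mul_lt {ι : Type*} {l : Filter ι} {X Y : ι → ℝ}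
    {x y : ℝ} (hX : Tendsto X l (𝓝 x)) (hx : 0 < x) (hY : Tendsto Y l (𝓝 y)) :
    ∀ᶠ ρ in 𝓝 0, ∀ᶠ i in l, ρ * Y i < X i := by
  have hcont : Tendsto (fun ρ : ℝ => ρ * y) (𝓝 0) (𝓝 0) := by
    simpa using (tendsto_id (x := 𝓝 (0 : ℝ))).mul_const y
  filter_upwards [hcont.eventually_lt_const hx] with ρ hρ
  exact (hY.const_mul ρ).eventually_lt hX hρ

theorem exists_strictMono_comp_forall_of_eventually {k : ℕ → ℕ} {P : ℕ → Prop}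
    (hk : Tendsto k atTop atTop) (hP : ∀ᶠ n in atTop, P n) :
    ∃ ψ : ℕ → ℕ, StrictMono (k ∘ ψ) ∧ ∀ n, P (ψ n) := by
  obtain ⟨N, hN⟩ := eventually_atTop.1 hP
  obtain ⟨ψ, -, hψ⟩ := strictMono_subseq_of_tendsto_atTop (hk.comp (tendsto_add_atTop_nat N))
  exact ⟨fun n => ψ n + N, hψ, fun n => hN _ (Nat.le_add_left N _)⟩

theorem exists_pos_eventually_mul_lt_overlap {h f g : ℝ → ℝ} {γ : ℝ} (Λ : ℝ)
    (hh : HasDerivWithinAt h γ (Icc 0 1) 0) (hγ : 0 < γ) (hh0 : h 0 = 0)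
    (hf : IsNSMap f) (hf2 : ContDiffOn ℝ 2 f (Icc 0 1))
    (hg : IsNSMap g) (hg2 : ContDiffOn ℝ 2 g (Icc 0 1))
    (hind : RatIndep (Real.log (derivWithin f (Icc 0 1) 0))
      (Real.log (derivWithin g (Icc 0 1) 0)))
    {a b c d : ℝ} (ha : 0 < a) (hab : a < b) (hb : b < 1) (hc : 0 < c) (hcd : c < d)
    (hd : d < 1) :
    ∃ ρ > 0, ∃ k l : ℕ → ℕ, Tendsto k atTop atTop ∧ ∀ᶠ n in atTop, 0 < k n ∧ 0 < l n ∧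
      ρ * (Λ * f^[k n] b) <
        min (h (f^[k n] b)) (g^[l n] d) - max (h (f^[k n] a)) (g^[l n] c) ∧
      ρ * g^[l n] d < min (h (f^[k n] b)) (g^[l n] d) - max (h (f^[k n] a)) (g^[l n] c) := by
  obtain ⟨cA, cB, hcA, hcAB, hA, hB⟩ := hf.exists_tendsto_iterate_div_pow hf2 ha hab hb
  obtain ⟨cC, cD, hcC, hcCD, hC, hD⟩ := hg.exists_tendsto_iterate_div_pow hg2 hc hcd hd
  have hcB : 0 < cB := hcA.trans hcAB
  have hcD : 0 < cD := hcC.trans hcCD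
  set α := derivWithin f (Icc 0 1) 0
  set β := derivWithin g (Icc 0 1) 0
  have hα0 : 0 < α := hf.2.2.2.2.1
  have hα1 : α < 1 := hf.2.2.2.2.2.1
  have hβ0 : 0 < β := hg.2.2.2.2.1
  have hβ1 : β < 1 := hg.2.2.2.2.2.1
  -- at the scale `β ^ l / α ^ k ≈ γ * cB / cD` the right ends of `h (f^k I)` and `g^l J` meet
  obtain ⟨k, l, hk, hl, hT⟩ :=
    hind.exists_tendsto_pow_div_pow hα0 hα1 hβ0 hβ1 (T := γ * cB / cD) (by positivity)
  have hαk : ∀ n, 0 < α ^ k n := fun n => pow_pos hα0 _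
  have hβl : ∀ n, β ^ l n ≠ 0 := fun n => (pow_pos hβ0 _).ne'
  have hf1 := hf2.of_le one_le_two
  have hA' : Tendsto (fun n => h (f^[k n] a) / α ^ k n) atTop (𝓝 (γ * cA)) :=
    hh.tendsto_comp_div hh0
      ((hf.tendsto_iterate_nhdsWithin hf1.continuousOn ⟨ha, hab.trans hb⟩).comp hk) (hA.comp hk)
  have hB' : Tendsto (fun n => h (f^[k n] b) / α ^ k n) atTop (𝓝 (γ * cB)) :=
    hh.tendsto_comp_div hh0
      ((hf.tendsto_iterate_nhdsWithin hf1.continuousOn ⟨ha.trans hab, hb⟩).comp hk) (hB.comp hk)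
  have hC' : Tendsto (fun n => g^[l n] c / α ^ k n) atTop (𝓝 (γ * cB / cD * cC)) :=
    (hT.mul (hC.comp hl)).congr fun n => by simp only [Function.comp_apply]; field_simp [hβl n]
  have hD' : Tendsto (fun n => g^[l n] d / α ^ k n) atTop (𝓝 (γ * cB / cD * cD)) :=
    (hT.mul (hD.comp hl)).congr fun n => by simp only [Function.comp_apply]; field_simp [hβl n]
  have hX0 : 0 < min (γ * cB) (γ * cB / cD * cD) - max (γ * cA) (γ * cB / cD * cC) := by
    rw [div_mul_cancel₀ _ hcD.ne', min_self, sub_pos, max_lt_iff, div_mul_eq_mul_div,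
      div_lt_iff₀ hcD]
    exact ⟨by gcongr, by gcongr⟩
  have hX := (hB'.min hD').sub (hA'.max hC')
  obtain ⟨ρ, ⟨hρf, hρg⟩, hρ⟩ := ((((eventually_nhds_zero_eventually_mul_lt hX hX0
    ((hB.comp hk).const_mul Λ)).and (eventually_nhds_zero_eventually_mul_lt hX hX0 hD')).filter_mono
    nhdsWithin_le_nhds).and (self_mem_nhdsWithin (s := Ioi 0))).exists
  refine ⟨ρ, hρ, k, l, hk, ?_⟩
  filter_upwards [hk.eventually_gt_atTop 0, hl.eventually_gt_atTop 0, hρf, hρg]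
    with n hkn hln hfn hgn
  simp only [Function.comp_apply, min_div_div_right (hαk n).le, max_div_div_right (hαk n).le,
    ← sub_div, ← mul_div_assoc, div_lt_div_iff_of_pos_right (hαk n)] at hfn hgn
  exact ⟨hkn, hln, hfn, hgn⟩

theorem toReal_volume_inter_iterate_ge_of_overlap {h f g : ℝ → ℝ} {K : ℝ≥0}
    (hK : LipschitzOnWith K h (Icc 0 1)) (hK0 : 0 < K)
    (hf : IsNSMap f) (hfc : ContinuousOn f (Icc 0 1))
    (hg : IsNSMap g) (hgc : ContinuousOn g (Icc 0 1))
    {a b c d ρ : ℝ} (ha : 0 < a) (hab : a < b) (hb : b < 1) (hc : 0 < c) (hcd : c < d)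
    (hd : d < 1) (hρ : 0 < ρ) {p q : ℕ}
    (hρf : ρ * (K * f^[p] b) < min (h (f^[p] b)) (g^[q] d) - max (h (f^[p] a)) (g^[q] c))
    (hρg : ρ * g^[q] d < min (h (f^[p] b)) (g^[q] d) - max (h (f^[p] a)) (g^[q] c)) :
    (volume ((f^[p] '' Icc a b) ∩ (h ⁻¹' (g^[q] '' Icc c d)))).toReal ≥
        ρ * (f^[p] b - f^[p + 1] b) ∧
      (volume ((h '' (f^[p] '' Icc a b)) ∩ (g^[q] '' Icc c d))).toReal ≥
        ρ * (g^[q] d - g^[q + 1] d) := by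
  have hfp : MapsTo f^[p] (Icc a b) (Icc 0 1) :=
    (hf.1.mapsTo.iterate p).mono_left (Icc_subset_Icc ha.le hb.le)
  have hoverlap := sub_le_toReal_volume_image_inter_image hab.le hcd.le
    (hK.continuousOn.comp ((hfc.iterate hf.1.mapsTo p).mono (Icc_subset_Icc ha.le hb.le)) hfp)
    ((hgc.iterate hg.1.mapsTo q).mono (Icc_subset_Icc hc.le hd.le))
  rw [image_comp, Function.comp_apply, Function.comp_apply] at hoverlap
  have hpre : f^[p] '' Icc a b ∩ h ⁻¹' (g^[q] '' Icc c d) ⊆ Icc 0 1 :=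
    inter_subset_left.trans (image_subset_iff.2 hfp)
  have hlip := (hK.mono hpre).toReal_volume_image_le
    ((measure_mono hpre).trans_lt measure_Icc_lt_top).ne
  rw [image_inter_preimage] at hlip
  have hfb := (hf.mapsTo_Ioo.iterate (p + 1) ⟨ha.trans hab, hb⟩).1
  have hgd := (hg.mapsTo_Ioo.iterate (q + 1) ⟨hc.trans hcd, hd⟩).1
  have hK0' : (0 : ℝ) < K := hK0
  constructor
  · refine le_of_mul_le_mul_left ?_ hK0'
    linarith [mul_pos (mul_pos hK0' hρ) hfb]
  · linarith [mul_pos hρ hgd]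

theorem intersection_iterates_proportion_general
    (h : ℝ → ℝ)
    (hh1 : ContDiffOn ℝ 1 h (Set.Icc 0 1))
    (hh0 : h 0 = 0)
    (hhpos : ∀ t ∈ Set.Icc (0 : ℝ) 1, 0 < derivWithin h (Set.Icc 0 1) t)
    (f g : ℝ → ℝ)
    (hf2 : ContDiffOn ℝ 2 f (Set.Icc 0 1)) (hfNS : IsNSMap f)
    (hg2 : ContDiffOn ℝ 2 g (Set.Icc 0 1)) (hgNS : IsNSMap g)
    (α β : ℝ)
    (hα : derivWithin f (Set.Icc 0 1) 0 = α)
    (hβ : derivWithin g (Set.Icc 0 1) 0 = β)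
    (hind : RatIndep (Real.log α) (Real.log β))
    (a b c d : ℝ) (hab : 0 < a ∧ a < b ∧ b < 1) (hcd : 0 < c ∧ c < d ∧ d < 1) :
    ∃ ρ : ℝ, 0 < ρ ∧
      ∃ k l : ℕ → ℕ,
        (∀ n : ℕ, 0 < k n ∧ 0 < l n) ∧
        Function.Injective (fun n => (k n, l n)) ∧
        (∀ n : ℕ,
          (volume ((f^[k n] '' Set.Icc a b) ∩ (h ⁻¹' (g^[l n] '' Set.Icc c d)))).toReal ≥
            ρ * (f^[k n] b - f^[k n + 1] b) ∧
          (volume ((h '' (f^[k n] '' Set.Icc a b)) ∩ (g^[l n] '' Set.Icc c d))).toReal ≥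
            ρ * (g^[l n] d - g^[l n + 1] d)) := by
  obtain ⟨ha, hab, hb⟩ := hab
  obtain ⟨hc, hcd, hd⟩ := hcd
  subst hα hβ
  have h0 : (0 : ℝ) ∈ Icc 0 1 := left_mem_Icc.2 zero_le_one
  obtain ⟨K, hK⟩ := hh1.exists_lipschitzOnWith_Icc one_pos
  obtain ⟨ρ, hρ, k, l, hk, hgood⟩ := exists_pos_eventually_mul_lt_overlap (K + 1 : ℝ≥0)
    (hh1.differentiableOn one_ne_zero 0 h0).hasDerivWithinAt (hhpos 0 h0) hh0
    hfNS hf2 hgNS hg2 hind ha hab hb hc hcd hd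
  obtain ⟨ψ, hψ, hgoodψ⟩ := exists_strictMono_comp_forall_of_eventually hk hgood
  refine ⟨ρ, hρ, k ∘ ψ, l ∘ ψ, fun n => ⟨(hgoodψ n).1, (hgoodψ n).2.1⟩,
    fun m n hmn => hψ.injective (congrArg Prod.fst hmn), fun n => ?_⟩
  obtain ⟨-, -, hρf, hρg⟩ := hgoodψ n
  exact toReal_volume_inter_iterate_ge_of_overlap (hK.weaken le_self_add) (by positivity)
    hfNS hf2.continuousOn hgNS hg2.continuousOn ha hab hb hc hcd hd hρ hρf hρg

/-- Let `h : [0,1] → [0,1]` be an orientation-preserving C¹ diffeomorphism,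
and let `f` and `g` be C² NS-maps on `[0,1]` such that `ln α` and `ln β` are rationally
independent, where `α = f'(0)` and `β = g'(0)`. Let `I = [a,b]` and `J = [c,d]` be
nondegenerate closed intervals contained in `(0,1)`. Then there exist a constant `ρ > 0`
and infinitely many pairs of positive integers `(k_n, l_n)` such that for every `n`:
`|f^{k_n}(I) ∩ h^{-1}(g^{l_n}(J))| ≥ ρ · (f^{k_n}(b) − f^{k_n+1}(b))` and
`|h(f^{k_n}(I)) ∩ g^{l_n}(J)| ≥ ρ · (g^{l_n}(d) − g^{l_n+1}(d))`,
where `|·|` denotes Lebesgue measure. -/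
theorem intersection_iterates_proportion
    (h : ℝ → ℝ)
    (hh1 : ContDiffOn ℝ 1 h (Set.Icc 0 1))
    (hhbij : Set.BijOn h (Set.Icc 0 1) (Set.Icc 0 1))
    (hh0 : h 0 = 0) (hh1' : h 1 = 1)
    (hhpos : ∀ t ∈ Set.Icc (0 : ℝ) 1, 0 < derivWithin h (Set.Icc 0 1) t)
    (f g : ℝ → ℝ)
    (hf2 : ContDiffOn ℝ 2 f (Set.Icc 0 1)) (hfNS : IsNSMap f)
    (hg2 : ContDiffOn ℝ 2 g (Set.Icc 0 1)) (hgNS : IsNSMap g)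
    (α β : ℝ)
    (hα : derivWithin f (Set.Icc 0 1) 0 = α)
    (hβ : derivWithin g (Set.Icc 0 1) 0 = β)
    (hind : RatIndep (Real.log α) (Real.log β))
    (a b c d : ℝ) (hab : 0 < a ∧ a < b ∧ b < 1) (hcd : 0 < c ∧ c < d ∧ d < 1) :
    ∃ ρ : ℝ, 0 < ρ ∧
      ∃ k l : ℕ → ℕ,
        (∀ n : ℕ, 0 < k n ∧ 0 < l n) ∧
        Function.Injective (fun n => (k n, l n)) ∧
        (∀ n : ℕ,
          (volume ((f^[k n] '' Set.Icc a b) ∩ (h ⁻¹' (g^[l n] '' Set.Icc c d)))).toReal ≥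
            ρ * (f^[k n] b - f^[k n + 1] b) ∧
          (volume ((h '' (f^[k n] '' Set.Icc a b)) ∩ (g^[l n] '' Set.Icc c d))).toReal ≥
            ρ * (g^[l n] d - g^[l n + 1] d)) :=
  intersection_iterates_proportion_general h hh1 hh0 hhpos f g hf2 hfNS hg2 hgNS α β hα hβ hind a b
    c d hab hcd
end

section
/- Let h : [0,1] → [0,1] be an orientation-preserving C¹ diffeomorphism, let f and g be C² NS-maps on [0,1] with α = f'(0), β = g'(0) and ln α, ln β rationally independent, and let δ > 0 be small enough that f and g each admit a C¹ Sternberg linearization on [0, δ]. Then for every x ∈ (0, δ] and every nondegenerate closed interval I = [a,b] ⊆ (0, δ], there exist infinitely many pairs of positive integers (k_n, l_n) such that g^{l_n}(x) ∈ h(f^{k_n}(I)), and moreover k_n / l_n → ln β / ln α as n → ∞. -/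
open Set Filter

/-- A C¹ Sternberg linearization of a map `φ` (with multiplier `μ = φ'(0)`) on `[0, δ]`:
a C¹ diffeomorphism `h₀` from `[0, δ]` onto its image with `h₀(0) = 0`, `h₀'(0) = 1`,
and `h₀(φ(t)) = μ · h₀(t)` for all `t ∈ [0, δ]`. -/
def IsSternbergLinearization (φ h₀ : ℝ → ℝ) (μ δ : ℝ) : Prop :=
  ContDiffOn ℝ 1 h₀ (Set.Icc 0 δ) ∧
  Set.InjOn h₀ (Set.Icc 0 δ) ∧
  (∀ t ∈ Set.Icc (0 : ℝ) δ, derivWithin h₀ (Set.Icc 0 δ) t ≠ 0) ∧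
  h₀ 0 = 0 ∧
  derivWithin h₀ (Set.Icc 0 δ) 0 = 1 ∧
  ∀ t ∈ Set.Icc (0 : ℝ) δ, h₀ (φ t) = μ * h₀ t

/-! Near the attracting fixed point `0` the Sternberg linearizations make the orbits geometric up
to a factor tending to `1`: `fᵏ(t) ~ αᵏ h₁(t)` and `gˡ(x) ~ βˡ h₂(x)`, while `h(u) ~ h'(0) u`.
So once `k` and `l` are large, `gˡ(x)` lies between `h(fᵏ a)` and `h(fᵏ b)` whenever `βˡ / αᵏ`
lies in a fixed window `[ρ₁, ρ₂]` strictly between `h'(0) h₁(a) / h₂(x)` and `h'(0) h₁(b) / h₂(x)`,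
that is, whenever `k (-ln α) - l (-ln β)` lies in a fixed interval. Since `ln α / ln β` is
irrational, the rotation by `-ln α` on the circle `ℝ / (-ln β) ℤ` is minimal, which gives
infinitely many such pairs; the bounded difference forces `k / l → ln β / ln α`. -/

open scoped Topology

theorem HasDerivWithinAt.tendsto_apply_div {ψ : ℝ → ℝ} {c : ℝ} {s : Set ℝ} {ι : Type*}
    {l : Filter ι} {u : ι → ℝ} (hψ : HasDerivWithinAt ψ c s 0) (hψ0 : ψ 0 = 0)
    (hu : Tendsto u l (𝓝[s \ {0}] 0)) :
    Tendsto (fun i => ψ (u i) / u i) l (𝓝 c) := by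
  simpa [Function.comp_def, slope_def_field, hψ0] using
    (hasDerivWithinAt_iff_tendsto_slope.1 hψ).comp hu

theorem mem_image_image_of_le_of_le {α β γ : Type*} [ConditionallyCompleteLinearOrder α]
    [TopologicalSpace α] [OrderTopology α] [DenselyOrdered α]
    [ConditionallyCompleteLinearOrder β] [TopologicalSpace β] [OrderTopology β] [DenselyOrdered β]
    [LinearOrder γ] [TopologicalSpace γ] [OrderClosedTopology γ]
    {F : α → β} {H : β → γ} {a b : α} {s : Set β} {w : γ} (hab : a ≤ b)
    (hF : ContinuousOn F (Icc a b)) (hFs : MapsTo F (Icc a b) s) (hs : s.OrdConnected)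
    (hH : ContinuousOn H s) (hw₁ : H (F a) ≤ w) (hw₂ : w ≤ H (F b)) :
    w ∈ H '' (F '' Icc a b) := by
  have hFab := hs.uIcc_subset (hFs (left_mem_Icc.2 hab)) (hFs (right_mem_Icc.2 hab))
  obtain ⟨y, hy, rfl⟩ := intermediate_value_uIcc (hH.mono hFab) (Icc_subset_uIcc ⟨hw₁, hw₂⟩)
  have hF' := intermediate_value_uIcc (f := F) (by rwa [uIcc_of_le hab])
  rw [uIcc_of_le hab] at hF'
  exact ⟨y, hF' hy, rfl⟩

theorem exists_forall_le_mul_le_of_tendsto {ι κ : Type*} {L₁ : Filter ι} {L₂ : Filter κ}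
    {R S : ι → ℝ} {T : κ → ℝ} {r s t : ℝ} (hR : Tendsto R L₁ (𝓝 r)) (hS : Tendsto S L₁ (𝓝 s))
    (hT : Tendsto T L₂ (𝓝 t)) (hr : 0 < r) (hrs : r < s) (ht : 0 < t) :
    ∃ ρ₁ ρ₂, 0 < ρ₁ ∧ ρ₁ < ρ₂ ∧ ∀ᶠ kl in L₁ ×ˢ L₂,
      ∀ ρ ∈ Icc ρ₁ ρ₂, R kl.1 ≤ ρ * T kl.2 ∧ ρ * T kl.2 ≤ S kl.1 := by
  obtain ⟨ρ₁, hrρ₁, hρ₁s⟩ := exists_between (div_lt_div_of_pos_right hrs ht)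
  obtain ⟨ρ₂, hρ₁₂, hρ₂s⟩ := exists_between hρ₁s
  rw [div_lt_iff₀ ht] at hrρ₁
  rw [lt_div_iff₀ ht] at hρ₂s
  have hT' : Tendsto (fun kl : ι × κ => T kl.2) (L₁ ×ˢ L₂) (𝓝 t) := hT.comp tendsto_snd
  have hR' : ∀ᶠ kl : ι × κ in L₁ ×ˢ L₂, R kl.1 - ρ₁ * T kl.2 < 0 :=
    ((hR.comp tendsto_fst).sub (hT'.const_mul ρ₁)).eventually (gt_mem_nhds (by linarith))
  have hS' : ∀ᶠ kl : ι × κ in L₁ ×ˢ L₂, 0 < S kl.1 - ρ₂ * T kl.2 :=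
    ((hS.comp tendsto_fst).sub (hT'.const_mul ρ₂)).eventually (lt_mem_nhds (by linarith))
  refine ⟨ρ₁, ρ₂, (div_pos hr ht).trans (by rwa [div_lt_iff₀ ht]), hρ₁₂, ?_⟩
  filter_upwards [hR', hS', hT'.eventually (lt_mem_nhds ht)] with kl hRkl hSkl hTkl ρ hρ
  exact ⟨by nlinarith [hρ.1], by nlinarith [hρ.2]⟩

theorem exists_forall_le_le_of_mul_sub_mem_Icc {X Y Z : ℕ → ℝ} {α β r s t : ℝ} (hα : 0 < α)
    (hβ : 0 < β) (hX : Tendsto (fun k => X k / α ^ k) atTop (𝓝 r))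
    (hY : Tendsto (fun k => Y k / α ^ k) atTop (𝓝 s))
    (hZ : Tendsto (fun l => Z l / β ^ l) atTop (𝓝 t)) (hr : 0 < r) (hrs : r < s) (ht : 0 < t) :
    ∃ D₁ D₂, D₁ < D₂ ∧ ∃ N, ∀ k l : ℕ, N ≤ k → N ≤ l →
      k * -Real.log α - l * -Real.log β ∈ Icc D₁ D₂ → X k ≤ Z l ∧ Z l ≤ Y k := by
  obtain ⟨ρ₁, ρ₂, hρ₁, hρ₁₂, hev⟩ := exists_forall_le_mul_le_of_tendsto hX hY hZ hr hrs ht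
  rw [prod_atTop_atTop_eq, eventually_atTop_prod_self] at hev
  obtain ⟨N, hN⟩ := hev
  refine ⟨Real.log ρ₁, Real.log ρ₂, Real.log_lt_log hρ₁ hρ₁₂, N, fun k l hk hl hkl => ?_⟩
  have hαk := pow_pos hα k
  have hβl := pow_pos hβ l
  have hlog : Real.log (β ^ l / α ^ k) = k * -Real.log α - l * -Real.log β := by
    rw [Real.log_div hβl.ne' hαk.ne', Real.log_pow, Real.log_pow]
    ring
  rw [← hlog] at hkl
  have hρ : β ^ l / α ^ k ∈ Icc ρ₁ ρ₂ :=
    ⟨(Real.log_le_log_iff hρ₁ (by positivity)).1 hkl.1,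
      (Real.log_le_log_iff (by positivity) (hρ₁.trans hρ₁₂)).1 hkl.2⟩
  have hscale : β ^ l / α ^ k * (Z l / β ^ l) = Z l / α ^ k := by field_simp
  obtain ⟨h₁, h₂⟩ := hN k l hk hl _ hρ
  rw [hscale, div_le_div_iff_of_pos_right hαk] at h₁ h₂
  exact ⟨h₁, h₂⟩

theorem frequently_exists_int_mul_sub_mem {p q : ℝ} (hq : 0 < q) (hpq : Irrational (p / q))
    {U : Set ℝ} (hU : IsOpen U) (hne : U.Nonempty) :
    ∃ᶠ k : ℕ in atTop, ∃ l : ℤ, k * p - l * q ∈ U := by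
  have : Fact (0 < q) := ⟨hq⟩
  obtain ⟨y, hy⟩ := hne
  have hcl : MapClusterPt (y : AddCircle q) atTop (fun k : ℕ => k • (p : AddCircle q)) := by
    rw [mapClusterPt_atTop_nsmul_iff_mem_topologicalClosure_zmultiples, ← SetLike.mem_coe,
      AddSubgroup.topologicalClosure_coe, AddSubgroup.coe_zmultiples,
      (AddCircle.denseRange_zsmul_coe_iff.2 hpq).closure_range]
    exact mem_univ _
  refine (hcl.frequently ((QuotientAddGroup.isOpenMap_coe _ hU).mem_nhds ⟨y, hy, rfl⟩)).mono ?_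
  rintro k ⟨t, ht, hkt⟩
  rw [← AddCircle.coe_nsmul, QuotientAddGroup.eq, AddSubgroup.mem_zmultiples_iff] at hkt
  obtain ⟨l, hl⟩ := hkt
  refine ⟨l, ?_⟩
  simp only [zsmul_eq_mul, nsmul_eq_mul] at hl
  rwa [hl, neg_add_eq_sub, sub_sub_cancel]

theorem frequently_exists_nat_mul_sub_mem_Ioo {p q D₁ D₂ : ℝ} (hp : 0 < p) (hq : 0 < q)
    (hpq : Irrational (p / q)) (hD : D₁ < D₂) (N : ℕ) :
    ∃ᶠ k : ℕ in atTop, ∃ l : ℕ, N < l ∧ k * p - l * q ∈ Ioo D₁ D₂ := by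
  have hlarge : ∀ᶠ k : ℕ in atTop, D₂ + N * q < k * p :=
    (tendsto_natCast_atTop_atTop.atTop_mul_const hp).eventually_gt_atTop _
  refine ((frequently_exists_int_mul_sub_mem hq hpq isOpen_Ioo (nonempty_Ioo.2 hD)).and_eventually
    hlarge).mono ?_
  rintro k ⟨⟨l, hl⟩, hk⟩
  have hNl : (N : ℝ) < l := lt_of_mul_lt_mul_right (by linarith [hl.2]) hq.le
  lift l to ℕ using by exact_mod_cast (Nat.cast_nonneg N).trans hNl.le
  exact ⟨l, by exact_mod_cast hNl, by exact_mod_cast hl⟩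

theorem tendsto_div_of_abs_mul_sub_le {ι : Type*} {L : Filter ι} {k l : ι → ℝ} {p q M : ℝ}
    (hp : p ≠ 0) (hq : q ≠ 0) (hk : Tendsto k L atTop) (hM : ∀ i, |k i * p - l i * q| ≤ M) :
    Tendsto (fun i => k i / l i) L (𝓝 (q / p)) := by
  have herr : Tendsto (fun i => (k i)⁻¹ * (k i * p - l i * q)) L (𝓝 0) :=
    hk.inv_tendsto_atTop.zero_mul_isBoundedUnder_le (isBoundedUnder_of ⟨M, hM⟩)
  have hlk : Tendsto (fun i => l i / k i) L (𝓝 (p / q)) := by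
    have := (herr.const_sub p).div_const q
    rw [sub_zero] at this
    refine this.congr' ?_
    filter_upwards [hk.eventually_ne_atTop 0] with i hi
    field_simp
    ring
  simpa using hlk.inv₀ (div_ne_zero hp hq)

theorem exists_strictMono_mul_sub_mem_Icc_tendsto_div {p q D₁ D₂ : ℝ} (hp : 0 < p) (hq : 0 < q)
    (hpq : Irrational (p / q)) (hD : D₁ < D₂) (N : ℕ) :
    ∃ k l : ℕ → ℕ, StrictMono k ∧ (∀ n, N < k n ∧ N < l n ∧ k n * p - l n * q ∈ Icc D₁ D₂) ∧
      Tendsto (fun n => (k n : ℝ) / l n) atTop (𝓝 (q / p)) := by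
  obtain ⟨k, hk, hkl⟩ := extraction_of_frequently_atTop
    ((frequently_exists_nat_mul_sub_mem_Ioo hp hq hpq hD N).and_eventually (eventually_gt_atTop N))
  have hNk n : N < k n := (hkl n).2
  choose l hNl hkl using fun n => (hkl n).1
  refine ⟨k, l, hk, fun n => ⟨hNk n, hNl n, Ioo_subset_Icc_self (hkl n)⟩, ?_⟩
  exact tendsto_div_of_abs_mul_sub_le hp.ne' hq.ne'
    (tendsto_natCast_atTop_atTop.comp hk.tendsto_atTop)
    (fun n => abs_le_max_abs_abs (hkl n).1.le (hkl n).2.le)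

theorem RatIndep.irrational_div {u v : ℝ} (h : RatIndep u v) (hv : v ≠ 0) :
    Irrational (u / v) := by
  rintro ⟨r, hr⟩
  have := h 1 (-r) (by push_cast; rw [hr]; field_simp; ring)
  exact one_ne_zero this.1

namespace IsNSMap

variable {φ : ℝ → ℝ}

theorem apply_mem_Icc (hφ : IsNSMap φ) {δ : ℝ} (hδ : δ ≤ 1) :
    ∀ t ∈ Icc 0 δ, φ t ∈ Icc 0 t := by
  obtain ⟨hbij, h0, h1, -, -, -, -, hlt⟩ := hφ
  intro t ⟨ht0, htδ⟩
  have ht : t ∈ Icc (0 : ℝ) 1 := ⟨ht0, htδ.trans hδ⟩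
  refine ⟨(hbij.mapsTo ht).1, ?_⟩
  rcases ht.1.eq_or_lt with rfl | ht0
  · rw [h0]
  rcases ht.2.eq_or_lt with rfl | ht1
  · rw [h1]
  exact (hlt t ⟨ht0, ht1⟩).le

theorem derivWithin_zero_mem_Ioo (hφ : IsNSMap φ) : derivWithin φ (Icc 0 1) 0 ∈ Ioo 0 1 :=
  ⟨hφ.2.2.2.2.1, hφ.2.2.2.2.2.1⟩

end IsNSMap

theorem mapsTo_Icc_of_apply_mem_Icc {φ : ℝ → ℝ} {δ : ℝ} (hφ : ∀ s ∈ Icc 0 δ, φ s ∈ Icc 0 s) :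
    MapsTo φ (Icc 0 δ) (Icc 0 δ) :=
  fun s hs => ⟨(hφ s hs).1, (hφ s hs).2.trans hs.2⟩

namespace IsSternbergLinearization

variable {φ h₀ : ℝ → ℝ} {μ δ : ℝ}

theorem hasDerivWithinAt_zero (hL : IsSternbergLinearization φ h₀ μ δ) (hδ : 0 ≤ δ) :
    HasDerivWithinAt h₀ 1 (Icc 0 δ) 0 := by
  have := (hL.1.differentiableOn one_ne_zero 0 ⟨le_rfl, hδ⟩).hasDerivWithinAt
  rwa [hL.2.2.2.2.1] at this

theorem strictMonoOn (hL : IsSternbergLinearization φ h₀ μ δ) (hδ : 0 ≤ δ) :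
    StrictMonoOn h₀ (Icc 0 δ) :=
  (hL.1.continuousOn.strictMonoOn_of_injOn_Icc' hδ hL.2.1).resolve_right fun hanti => by
    have := hanti.antitoneOn.derivWithin_nonpos (x := 0)
    rw [hL.2.2.2.2.1] at this
    exact one_pos.not_ge this

theorem pos (hL : IsSternbergLinearization φ h₀ μ δ) {t : ℝ} (ht : t ∈ Ioc 0 δ) : 0 < h₀ t := by
  have hδ : 0 ≤ δ := ht.1.le.trans ht.2
  have := hL.strictMonoOn hδ ⟨le_rfl, hδ⟩ (Ioc_subset_Icc_self ht) ht.1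
  rwa [hL.2.2.2.1] at this

theorem apply_iterate (hL : IsSternbergLinearization φ h₀ μ δ)
    (hφ : MapsTo φ (Icc 0 δ) (Icc 0 δ)) {t : ℝ} (ht : t ∈ Icc 0 δ) (k : ℕ) :
    h₀ (φ^[k] t) = μ ^ k * h₀ t := by
  induction k with
  | zero => simp
  | succ k ih =>
    rw [Function.iterate_succ_apply', hL.2.2.2.2.2 _ (hφ.iterate k ht), ih]
    ring

theorem tendsto_iterate (hL : IsSternbergLinearization φ h₀ μ δ) (hμ : |μ| < 1)
    (hφ : ∀ s ∈ Icc 0 δ, φ s ∈ Icc 0 s) {t : ℝ} (ht : t ∈ Icc 0 δ) :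
    Tendsto (fun k => φ^[k] t) atTop (𝓝 0) := by
  have hmaps := mapsTo_Icc_of_apply_mem_Icc hφ
  have hu : ∀ k, φ^[k] t ∈ Icc 0 δ := fun k => hmaps.iterate k ht
  have hanti : Antitone fun k => φ^[k] t := antitone_nat_of_succ_le fun k => by
    simpa only [Function.iterate_succ_apply'] using (hφ _ (hu k)).2
  have hlim := tendsto_atTop_ciInf hanti ⟨0, by rintro _ ⟨k, rfl⟩; exact (hu k).1⟩
  set L := ⨅ k, φ^[k] t
  have hL_mem : L ∈ Icc 0 δ := isClosed_Icc.mem_of_tendsto hlim (.of_forall hu)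
  have hh₀L : Tendsto (fun k => h₀ (φ^[k] t)) atTop (𝓝 (h₀ L)) :=
    (hL.1.continuousOn L hL_mem).tendsto.comp (tendsto_nhdsWithin_iff.2 ⟨hlim, .of_forall hu⟩)
  have hh₀0 : Tendsto (fun k => h₀ (φ^[k] t)) atTop (𝓝 0) := by
    simpa [hL.apply_iterate hmaps ht] using
      (tendsto_pow_atTop_nhds_zero_of_abs_lt_one hμ).mul_const (h₀ t)
  have hL0 : L = 0 := hL.2.1 hL_mem ⟨le_rfl, ht.1.trans ht.2⟩
    ((tendsto_nhds_unique hh₀L hh₀0).trans hL.2.2.2.1.symm)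
  rwa [hL0] at hlim

theorem tendsto_comp_iterate_div_pow (hL : IsSternbergLinearization φ h₀ μ δ) (hμ0 : μ ≠ 0)
    (hμ : |μ| < 1) (hφ : ∀ s ∈ Icc 0 δ, φ s ∈ Icc 0 s) {t : ℝ} (ht : t ∈ Ioc 0 δ)
    {ψ : ℝ → ℝ} {c : ℝ} {s : Set ℝ} (hψ : HasDerivWithinAt ψ c s 0) (hψ0 : ψ 0 = 0)
    (hs : Icc 0 δ ⊆ s) :
    Tendsto (fun k => ψ (φ^[k] t) / μ ^ k) atTop (𝓝 (c * h₀ t)) := by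
  have hmaps := mapsTo_Icc_of_apply_mem_Icc hφ
  have ht' : t ∈ Icc 0 δ := Ioc_subset_Icc_self ht
  have hδ : 0 ≤ δ := ht.1.le.trans ht.2
  have hh₀t : h₀ t ≠ 0 := fun h => ht.1.ne' (hL.2.1 ht' ⟨le_rfl, hδ⟩ (h.trans hL.2.2.2.1.symm))
  have hiter := hL.apply_iterate hmaps ht'
  have hu0 : ∀ k, φ^[k] t ≠ 0 := fun k h => by
    have := hiter k
    rw [h, hL.2.2.2.1] at this
    exact mul_ne_zero (pow_ne_zero k hμ0) hh₀t this.symm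
  have hu : Tendsto (fun k => φ^[k] t) atTop (𝓝[Icc 0 δ \ {0}] 0) :=
    tendsto_nhdsWithin_iff.2 ⟨hL.tendsto_iterate hμ hφ ht',
      .of_forall fun k => ⟨hmaps.iterate k ht', hu0 k⟩⟩
  have hψu := hψ.tendsto_apply_div hψ0
    (hu.mono_right (nhdsWithin_mono _ (sdiff_subset_sdiff_left hs)))
  have hh₀u := (hL.hasDerivWithinAt_zero hδ).tendsto_apply_div hL.2.2.2.1 hu
  have := (hψu.mul (hh₀u.inv₀ one_ne_zero)).mul_const (h₀ t)
  rw [inv_one, mul_one] at this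
  refine this.congr fun k => ?_
  rw [hiter k]
  field_simp [hu0 k, hh₀t, pow_ne_zero k hμ0]

end IsSternbergLinearization

theorem lemma_infinitely_many_intersections_general
    (h : ℝ → ℝ)
    (hh1 : ContDiffOn ℝ 1 h (Set.Icc 0 1))
    (hh0 : h 0 = 0)
    (hhpos : ∀ t ∈ Set.Icc (0 : ℝ) 1, 0 < derivWithin h (Set.Icc 0 1) t)
    (f g : ℝ → ℝ)
    (hf2 : ContDiffOn ℝ 2 f (Set.Icc 0 1)) (hfNS : IsNSMap f)
    (hgNS : IsNSMap g)
    (α β : ℝ)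
    (hα : derivWithin f (Set.Icc 0 1) 0 = α)
    (hβ : derivWithin g (Set.Icc 0 1) 0 = β)
    (hind : RatIndep (Real.log α) (Real.log β))
    (δ : ℝ) (hδ1 : δ ≤ 1)
    (hlinf : ∃ h₁ : ℝ → ℝ, IsSternbergLinearization f h₁ α δ)
    (hling : ∃ h₂ : ℝ → ℝ, IsSternbergLinearization g h₂ β δ)
    (x : ℝ) (hx : x ∈ Set.Ioc 0 δ)
    (a b : ℝ) (ha : 0 < a) (hab : a < b) (hb : b ≤ δ) :
    ∃ k l : ℕ → ℕ,
      (∀ n : ℕ, 0 < k n ∧ 0 < l n) ∧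
      Function.Injective (fun n => (k n, l n)) ∧
      (∀ n : ℕ, g^[l n] x ∈ h '' (f^[k n] '' Set.Icc a b)) ∧
      Tendsto (fun n : ℕ => (k n : ℝ) / (l n : ℝ)) atTop
        (nhds (Real.log β / Real.log α)) := by
  obtain ⟨h₁, hL₁⟩ := hlinf
  obtain ⟨h₂, hL₂⟩ := hling
  obtain ⟨hα0, hα1⟩ : α ∈ Ioo 0 1 := hα ▸ hfNS.derivWithin_zero_mem_Ioo
  obtain ⟨hβ0, hβ1⟩ : β ∈ Ioo 0 1 := hβ ▸ hgNS.derivWithin_zero_mem_Ioo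
  have ha' : a ∈ Ioc 0 δ := ⟨ha, hab.le.trans hb⟩
  have hb' : b ∈ Ioc 0 δ := ⟨ha.trans hab, hb⟩
  have hc := hhpos 0 ⟨le_rfl, zero_le_one⟩
  have hh' := (hh1.differentiableOn one_ne_zero 0 ⟨le_rfl, zero_le_one⟩).hasDerivWithinAt
  have hf_orbit {t : ℝ} (ht : t ∈ Ioc 0 δ) :=
    hL₁.tendsto_comp_iterate_div_pow hα0.ne' (abs_lt.2 ⟨by linarith, hα1⟩)
      (hfNS.apply_mem_Icc hδ1) ht hh' hh0 (Icc_subset_Icc_right hδ1)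
  have hg_orbit := hL₂.tendsto_comp_iterate_div_pow hβ0.ne' (abs_lt.2 ⟨by linarith, hβ1⟩)
    (hgNS.apply_mem_Icc hδ1) hx (hasDerivWithinAt_id 0 univ) rfl (subset_univ _)
  have hab₁ := hL₁.strictMonoOn (hx.1.le.trans hx.2) (Ioc_subset_Icc_self ha')
    (Ioc_subset_Icc_self hb') hab
  obtain ⟨D₁, D₂, hD, N, hN⟩ := exists_forall_le_le_of_mul_sub_mem_Icc hα0 hβ0
    (hf_orbit ha') (hf_orbit hb') hg_orbit (mul_pos hc (hL₁.pos ha'))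
    (mul_lt_mul_of_pos_left hab₁ hc) (by simpa using hL₂.pos hx)
  have hp : 0 < -Real.log α := neg_pos.2 (Real.log_neg hα0 hα1)
  have hq : 0 < -Real.log β := neg_pos.2 (Real.log_neg hβ0 hβ1)
  have hirr : Irrational (-Real.log α / -Real.log β) := by
    rw [neg_div_neg_eq]
    exact hind.irrational_div (neg_ne_zero.1 hq.ne')
  obtain ⟨k, l, hk, hkl, hlim⟩ := exists_strictMono_mul_sub_mem_Icc_tendsto_div hp hq hirr hD N
  refine ⟨k, l, fun n => ⟨N.zero_le.trans_lt (hkl n).1, N.zero_le.trans_lt (hkl n).2.1⟩,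
    fun m n hmn => hk.injective congr(($hmn).1), fun n => ?_, by rwa [neg_div_neg_eq] at hlim⟩
  obtain ⟨hXZ, hZY⟩ := hN (k n) (l n) (hkl n).1.le (hkl n).2.1.le (hkl n).2.2
  have hI : Icc a b ⊆ Icc (0 : ℝ) 1 := Icc_subset_Icc ha.le (hb.trans hδ1)
  exact mem_image_image_of_le_of_le hab.le ((hf2.continuousOn.iterate hfNS.1.mapsTo _).mono hI)
    ((hfNS.1.mapsTo.iterate _).mono_left hI) ordConnected_Icc hh1.continuousOn hXZ hZY

/-- Lemma 2.4 of the paper: Let `h : [0,1] → [0,1]` be an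
orientation-preserving C¹ diffeomorphism, let `f` and `g` be C² NS-maps on `[0,1]` with
`α = f'(0)`, `β = g'(0)` and `ln α, ln β` rationally independent, and let `δ > 0` be
small enough that `f` and `g` each admit a C¹ Sternberg linearization on `[0, δ]`.
Then for every `x ∈ (0, δ]` and every nondegenerate closed interval
`I = [a,b] ⊆ (0, δ]`, there exist infinitely many pairs of positive integers
`(k_n, l_n)` such that `g^{l_n}(x) ∈ h(f^{k_n}(I))`, and moreover
`k_n / l_n → ln β / ln α` as `n → ∞`. -/
theorem lemma_infinitely_many_intersections
    (h : ℝ → ℝ)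
    (hh1 : ContDiffOn ℝ 1 h (Set.Icc 0 1))
    (hhbij : Set.BijOn h (Set.Icc 0 1) (Set.Icc 0 1))
    (hh0 : h 0 = 0) (hh1' : h 1 = 1)
    (hhpos : ∀ t ∈ Set.Icc (0 : ℝ) 1, 0 < derivWithin h (Set.Icc 0 1) t)
    (f g : ℝ → ℝ)
    (hf2 : ContDiffOn ℝ 2 f (Set.Icc 0 1)) (hfNS : IsNSMap f)
    (hg2 : ContDiffOn ℝ 2 g (Set.Icc 0 1)) (hgNS : IsNSMap g)
    (α β : ℝ)
    (hα : derivWithin f (Set.Icc 0 1) 0 = α)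
    (hβ : derivWithin g (Set.Icc 0 1) 0 = β)
    (hind : RatIndep (Real.log α) (Real.log β))
    (δ : ℝ) (hδ : 0 < δ) (hδ1 : δ ≤ 1)
    (hlinf : ∃ h₁ : ℝ → ℝ, IsSternbergLinearization f h₁ α δ)
    (hling : ∃ h₂ : ℝ → ℝ, IsSternbergLinearization g h₂ β δ)
    (x : ℝ) (hx : x ∈ Set.Ioc 0 δ)
    (a b : ℝ) (ha : 0 < a) (hab : a < b) (hb : b ≤ δ) :
    ∃ k l : ℕ → ℕ,
      (∀ n : ℕ, 0 < k n ∧ 0 < l n) ∧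
      Function.Injective (fun n => (k n, l n)) ∧
      (∀ n : ℕ, g^[l n] x ∈ h '' (f^[k n] '' Set.Icc a b)) ∧
      Tendsto (fun n : ℕ => (k n : ℝ) / (l n : ℝ)) atTop
        (nhds (Real.log β / Real.log α)) :=
  lemma_infinitely_many_intersections_general h hh1 hh0 hhpos f g hf2 hfNS hgNS α β hα hβ hind δ hδ1
    hlinf hling x hx a b ha hab hb
end

section
/- Let α, β ∈ (0,1) with ln α and ln β rationally independent, let Δ > 0, and let H : [0, Δ] → [0, H(Δ)] be an orientation-preserving C¹ diffeomorphism with H(0) = 0 and H'(0) = θ > 0. Then for every x ∈ (0, H(Δ)] and every nondegenerate closed interval [a, b] ⊆ (0, Δ], there exist infinitely many pairs of positive integers (k, l) such that β^l · x ∈ H(α^k · [a, b]), equivalently α^{-k} · H^{-1}(β^l · x) ∈ [a, b]; moreover these pairs satisfy k/l → ln β / ln α. -/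
open Set Filter

lemma exists_small_pos (γ : ℝ) (hirr : Irrational γ) {ε : ℝ} (hε : 0 < ε) :
    ∃ (m : ℤ) (n : ℕ), 0 < n ∧ 0 < (m : ℝ) - (n : ℝ) * γ ∧ (m : ℝ) - (n : ℝ) * γ < ε := by
  -- the subgroup generated by 1 and γ is dense
  set S : AddSubgroup ℝ := AddSubgroup.closure {1, γ} with hS
  have hdense : Dense (S : Set ℝ) := by
    rcases S.dense_or_cyclic with h | ⟨c, hc⟩
    · exact h
    · exfalso
      have h1 : (1 : ℝ) ∈ S := AddSubgroup.subset_closure (by simp)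
      have h2 : γ ∈ S := AddSubgroup.subset_closure (by simp)
      rw [hc, AddSubgroup.mem_closure_singleton] at h1 h2
      obtain ⟨m, hm⟩ := h1
      obtain ⟨n, hn⟩ := h2
      rw [zsmul_eq_mul] at hm hn
      have hm0 : (m : ℝ) ≠ 0 := by
        intro h0
        rw [h0] at hm
        simp at hm
      refine hirr ⟨(n : ℚ) / (m : ℚ), ?_⟩
      have hmQ : (m : ℚ) ≠ 0 := by exact_mod_cast fun h => hm0 (by exact_mod_cast h)
      push_cast
      rw [div_eq_iff (by exact_mod_cast hmQ)]
      have hc0 : c = 1 / m := by field_simp at hm ⊢; linarith [hm]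
      rw [← hn, hc0]; field_simp
  -- get a small positive element m + nγ
  have hεmin : (0:ℝ) < min ε 1 := lt_min hε one_pos
  obtain ⟨g, hgS, hg⟩ := hdense.exists_mem_open isOpen_Ioo (⟨min ε 1 / 2, by constructor <;> [positivity; linarith]⟩ : (Ioo (0:ℝ) (min ε 1)).Nonempty)
  have hgS' : g ∈ AddSubgroup.closure ({1, γ} : Set ℝ) := hgS
  rw [AddSubgroup.mem_closure_pair] at hgS'
  obtain ⟨m, n, hmn⟩ := hgS'
  rw [zsmul_eq_mul, zsmul_eq_mul, mul_one] at hmn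
  -- g = m + n * γ, 0 < g < min ε 1
  rcases lt_trichotomy n 0 with hn | hn | hn
  · refine ⟨m, (-n).toNat, by omega, ?_, ?_⟩ <;>
    · have : ((((-n).toNat : ℤ)) : ℝ) = -(n:ℝ) := by
        rw [Int.toNat_of_nonneg (by omega)]; push_cast; ring
      rw [show (((-n).toNat : ℕ) : ℝ) = (((-n).toNat : ℤ) : ℝ) by push_cast; ring, this]
      rcases hg with ⟨hg1, hg2⟩
      nlinarith [min_le_left ε 1]
  · exfalso
    subst hn
    simp at hmn
    rcases hg with ⟨hg1, hg2⟩
    rw [← hmn] at hg1 hg2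
    have hg2' : (m:ℝ) < 1 := lt_of_lt_of_le hg2 (min_le_right _ _)
    have : 1 ≤ m := by exact_mod_cast hg1
    have : (1:ℝ) ≤ m := by exact_mod_cast this
    linarith
  · -- n > 0 : reduce e₀ = ⌈γ⌉ - γ modulo g
    obtain ⟨hg1, hg2⟩ := hg
    have he0pos : (0:ℝ) < (⌈γ⌉ : ℝ) - γ := by
      rcases lt_or_eq_of_le (Int.le_ceil γ) with h | h
      · linarith
      · exact absurd h (hirr.ne_int ⌈γ⌉)
    set j : ℕ := ⌊((⌈γ⌉ : ℝ) - γ) / g⌋₊ with hj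
    have hjle : (j : ℝ) * g ≤ (⌈γ⌉ : ℝ) - γ := by
      have h1 : (j : ℝ) ≤ ((⌈γ⌉ : ℝ) - γ) / g := Nat.floor_le (by positivity)
      calc (j:ℝ) * g ≤ (((⌈γ⌉ : ℝ) - γ)/g) * g := by nlinarith
        _ = (⌈γ⌉ : ℝ) - γ := by field_simp
    have hjgt : (⌈γ⌉ : ℝ) - γ < ((j:ℝ) + 1) * g := by
      have h1 : ((⌈γ⌉ : ℝ) - γ) / g < (j:ℝ) + 1 := Nat.lt_floor_add_one _
      exact (div_lt_iff₀ hg1).1 h1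
    have hn'pos : (0:ℤ) < 1 + (j:ℤ) * n := by
      have : (0:ℤ) ≤ (j:ℤ) * n := mul_nonneg (by positivity) hn.le
      omega
    have hcast : (((1 + (j:ℤ) * n).toNat : ℕ) : ℝ) = 1 + (j:ℝ) * (n:ℝ) := by
      have h := Int.toNat_of_nonneg hn'pos.le
      have h2 := congrArg (Int.cast : ℤ → ℝ) h
      push_cast at h2
      exact h2
    have key : ((⌈γ⌉ - (j:ℤ) * m : ℤ) : ℝ) - (1 + (j:ℝ) * (n:ℝ)) * γ
        = ((⌈γ⌉ : ℝ) - γ) - (j:ℝ) * g := by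
      push_cast
      rw [← hmn]
      ring
    have hVne : ((⌈γ⌉ - (j:ℤ) * m : ℤ) : ℝ) - (1 + (j:ℝ) * (n:ℝ)) * γ ≠ 0 := by
      intro h0
      refine hirr ⟨((⌈γ⌉ - (j:ℤ) * m : ℤ) : ℚ) / ((1 + (j:ℤ) * n : ℤ) : ℚ), ?_⟩
      have hnR : (0:ℝ) < (n:ℝ) := by exact_mod_cast hn
      have hdR : (0:ℝ) < 1 + (j:ℝ) * (n:ℝ) := by positivity
      push_cast
      rw [div_eq_iff hdR.ne']
      push_cast at h0
      linarith
    refine ⟨⌈γ⌉ - (j:ℤ) * m, (1 + (j:ℤ) * n).toNat, by omega, ?_, ?_⟩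
    · rw [hcast, key]
      rcases lt_or_eq_of_le (sub_nonneg.2 hjle) with h | h
      · linarith
      · exfalso; apply hVne; rw [key, ← h]
    · rw [hcast, key]
      have := min_le_left ε 1
      nlinarith

lemma aux_step (γ : ℝ) (hirr : Irrational γ) (hγ : 0 < γ) (p q : ℝ) (hpq : p < q) (N : ℕ) :
    ∃ k l : ℕ, N ≤ l ∧ 1 ≤ k ∧ p ≤ (k:ℝ) - (l:ℝ) * γ ∧ (k:ℝ) - (l:ℝ) * γ ≤ q := by
  obtain ⟨M, hM⟩ := exists_nat_ge ((1 - p)/γ)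
  set N' : ℕ := max N M with hN'
  have hP1 : (1:ℝ) ≤ (N':ℝ) * γ + p := by
    have h1 : (M:ℝ) ≤ (N':ℝ) := by exact_mod_cast le_max_right N M
    have h2 : (1 - p) ≤ (M:ℝ) * γ := by
      rw [div_le_iff₀ hγ] at hM; linarith
    nlinarith
  obtain ⟨m, n, hn, hw1, hw2⟩ := exists_small_pos γ hirr (sub_pos.2 hpq)
  have hnR : (0:ℝ) < (n:ℝ) := by exact_mod_cast hn
  have hP0 : (0:ℝ) < (N':ℝ) * γ + p := lt_of_lt_of_le one_pos hP1
  set j : ℕ := ⌈((N':ℝ) * γ + p) / ((m:ℝ) - (n:ℝ)*γ)⌉₊ with hjdef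
  have hj1 : ((N':ℝ) * γ + p) / ((m:ℝ) - (n:ℝ)*γ) ≤ (j:ℝ) := Nat.le_ceil _
  have hjw1 : (N':ℝ) * γ + p ≤ (j:ℝ) * ((m:ℝ) - (n:ℝ)*γ) := by
    rw [div_le_iff₀ hw1] at hj1; linarith
  have hj2 : (j:ℝ) < ((N':ℝ) * γ + p) / ((m:ℝ) - (n:ℝ)*γ) + 1 :=
    Nat.ceil_lt_add_one (by positivity)
  have hjw2 : (j:ℝ) * ((m:ℝ) - (n:ℝ)*γ) < ((N':ℝ) * γ + p) + ((m:ℝ) - (n:ℝ)*γ) := by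
    nlinarith [mul_lt_mul_of_pos_right hj2 hw1,
      div_mul_cancel₀ ((N':ℝ) * γ + p) hw1.ne']
  have hkR : (1:ℝ) ≤ (j:ℝ) * (m:ℝ) := by
    nlinarith [mul_nonneg (mul_nonneg (Nat.cast_nonneg j : (0:ℝ) ≤ (j:ℝ)) hnR.le) hγ.le]
  have hjm : (1:ℤ) ≤ (j:ℤ) * m := by exact_mod_cast hkR
  refine ⟨((j:ℤ) * m).toNat, N' + j * n, ?_, by omega, ?_, ?_⟩
  · exact le_trans (le_max_left N M) (Nat.le_add_right _ _)
  all_goals {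
    have hc1 : ((((j:ℤ) * m).toNat : ℕ) : ℝ) = (j:ℝ) * (m:ℝ) := by
      have h := Int.toNat_of_nonneg (by omega : (0:ℤ) ≤ (j:ℤ) * m)
      have h2 := congrArg (Int.cast : ℤ → ℝ) h
      push_cast at h2
      exact h2
    have hc2 : ((N' + j * n : ℕ) : ℝ) = (N':ℝ) + (j:ℝ) * (n:ℝ) := by push_cast; ring
    rw [hc1, hc2]
    nlinarith
  }

/-- linearized intersection mechanism: Let `α, β ∈ (0,1)` with `ln α` and
`ln β` rationally independent, let `Δ > 0`, and let `H : [0, Δ] → [0, H(Δ)]` be an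
orientation-preserving C¹ diffeomorphism with `H(0) = 0` and `H'(0) = θ > 0`. Then for
every `x ∈ (0, H(Δ)]` and every nondegenerate closed interval `[a, b] ⊆ (0, Δ]`, there
exist infinitely many pairs of positive integers `(k, l)` such that
`β^l · x ∈ H(α^k · [a, b])`; moreover these pairs satisfy `k/l → ln β / ln α`. -/
theorem linearized_intersection_mechanism
    (α β : ℝ) (hα : α ∈ Set.Ioo (0 : ℝ) 1) (hβ : β ∈ Set.Ioo (0 : ℝ) 1)
    (hind : RatIndep (Real.log α) (Real.log β))
    (Δ : ℝ) (hΔ : 0 < Δ)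
    (H : ℝ → ℝ)
    (hH1 : ContDiffOn ℝ 1 H (Set.Icc 0 Δ))
    (hHbij : Set.BijOn H (Set.Icc 0 Δ) (Set.Icc 0 (H Δ)))
    (hH0 : H 0 = 0)
    (θ : ℝ) (hθ : 0 < θ) (hHθ : derivWithin H (Set.Icc 0 Δ) 0 = θ)
    (hHpos : ∀ t ∈ Set.Icc (0 : ℝ) Δ, 0 < derivWithin H (Set.Icc 0 Δ) t)
    (x : ℝ) (hx : x ∈ Set.Ioc 0 (H Δ))
    (a b : ℝ) (ha : 0 < a) (hab : a < b) (hb : b ≤ Δ) :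
    ∃ k l : ℕ → ℕ,
      (∀ n : ℕ, 0 < k n ∧ 0 < l n) ∧
      Function.Injective (fun n => (k n, l n)) ∧
      (∀ n : ℕ, β ^ (l n) * x ∈ H '' Set.Icc (α ^ (k n) * a) (α ^ (k n) * b)) ∧
      Tendsto (fun n : ℕ => (k n : ℝ) / (l n : ℝ)) atTop
        (nhds (Real.log β / Real.log α)) := by
  obtain ⟨hα0, hα1⟩ := hα
  obtain ⟨hβ0, hβ1⟩ := hβ
  obtain ⟨hx0, hxΔ⟩ := hx
  set u := Real.log α with hu_def
  set v := Real.log β with hv_def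
  have hu : u < 0 := Real.log_neg hα0 hα1
  have hv : v < 0 := Real.log_neg hβ0 hβ1
  have hune : u ≠ 0 := ne_of_lt hu
  set γ := v / u with hγ_def
  have hγpos : 0 < γ := div_pos_of_neg_of_neg hv hu
  have hγu : γ * u = v := div_mul_cancel₀ v hune
  -- γ is irrational
  have hirr : Irrational γ := by
    rintro ⟨r, hr⟩
    have hru : (r : ℝ) * u = v := by rw [hr, hγ_def]; field_simp
    have h := hind r (-1) (by push_cast; linarith)
    norm_num at h
  -- H is strictly monotone on [0, Δ]
  have hmono : StrictMonoOn H (Set.Icc 0 Δ) := by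
    apply strictMonoOn_of_deriv_pos (convex_Icc 0 Δ) hH1.continuousOn
    intro t ht
    rw [interior_Icc] at ht
    rw [← derivWithin_of_mem_nhds (Icc_mem_nhds ht.1 ht.2)]
    exact hHpos t (Ioo_subset_Icc_self ht)
  -- the preimages T l of β^l x
  have hTex : ∀ l : ℕ, ∃ t, t ∈ Set.Icc 0 Δ ∧ H t = β ^ l * x := by
    intro l
    have hmem : β ^ l * x ∈ Set.Icc 0 (H Δ) := by
      constructor
      · positivity
      · have h1 : β ^ l ≤ 1 := pow_le_one₀ hβ0.le hβ1.le
        nlinarith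
    obtain ⟨t, ht, hHt⟩ := hHbij.surjOn hmem
    exact ⟨t, ht, hHt⟩
  choose T hTmem hTeq using hTex
  have hTpos : ∀ l, 0 < T l := by
    intro l
    rcases (hTmem l).1.lt_or_eq with h | h
    · exact h
    · exfalso
      have : H (T l) = 0 := by rw [← h, hH0]
      rw [hTeq l] at this
      have : (0:ℝ) < β ^ l * x := by positivity
      simp_all
  -- T l → 0
  have hβx : Tendsto (fun l : ℕ => β ^ l * x) atTop (nhds 0) := by
    simpa using (tendsto_pow_atTop_nhds_zero_of_lt_one hβ0.le hβ1).mul_const x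
  have hTlim : Tendsto T atTop (nhds 0) := by
    rw [tendsto_order]
    constructor
    · intro c hc
      exact Eventually.of_forall fun l => lt_trans hc (hTpos l)
    · intro c hc
      have hc' : 0 < min c Δ := lt_min hc hΔ
      have hcΔ : min c Δ ∈ Set.Icc (0:ℝ) Δ := ⟨hc'.le, min_le_right _ _⟩
      have hHc : 0 < H (min c Δ) := by
        rw [← hH0]
        exact hmono ⟨le_rfl, hΔ.le⟩ hcΔ hc'
      filter_upwards [hβx.eventually_lt_const hHc] with l hl
      have h2 : H (T l) < H (min c Δ) := by rw [hTeq l]; exact hl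
      have h3 : T l < min c Δ := by
        by_contra h4
        push_neg at h4
        rcases h4.lt_or_eq with h5 | h5
        · exact absurd (hmono hcΔ (hTmem l) h5) (by linarith)
        · rw [h5] at h2; linarith
      exact lt_of_lt_of_le h3 (min_le_left _ _)
  -- slope of H at 0 along T tends to θ
  have hdiff0 : HasDerivWithinAt H θ (Set.Icc 0 Δ) 0 := by
    have h := (hH1.differentiableOn one_ne_zero) 0 ⟨le_rfl, hΔ.le⟩
    have h2 := h.hasDerivWithinAt
    rwa [hHθ] at h2
  have hslope : Tendsto (slope H 0) (nhdsWithin 0 (Set.Icc 0 Δ \ {0})) (nhds θ) :=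
    hasDerivWithinAt_iff_tendsto_slope.1 hdiff0
  have hTin : Tendsto T atTop (nhdsWithin 0 (Set.Icc 0 Δ \ {0})) := by
    rw [tendsto_nhdsWithin_iff]
    exact ⟨hTlim, Eventually.of_forall fun l => ⟨hTmem l, by simp [(hTpos l).ne']⟩⟩
  have hR : Tendsto (fun l => slope H 0 (T l)) atTop (nhds θ) := hslope.comp hTin
  have hslope_eq : ∀ l, slope H 0 (T l) = β ^ l * x / T l := by
    intro l
    rw [slope_def_field, hTeq l, hH0]
    ring_nf
  have hRpos : ∀ l, 0 < slope H 0 (T l) := by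
    intro l
    rw [hslope_eq l]
    exact div_pos (by positivity) (hTpos l)
  have hlogR : Tendsto (fun l => Real.log (slope H 0 (T l))) atTop (nhds (Real.log θ)) :=
    ((Real.continuousAt_log hθ.ne').tendsto).comp hR
  have hlogT : ∀ l : ℕ, Real.log (T l)
      = (l : ℝ) * v + Real.log x - Real.log (slope H 0 (T l)) := by
    intro l
    have h1 : (β ^ l * x) / slope H 0 (T l) = T l := by
      rw [hslope_eq l]
      field_simp
    conv_lhs => rw [← h1]
    rw [Real.log_div (by positivity) (hRpos l).ne',
      Real.log_mul (by positivity) hx0.ne', Real.log_pow]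
  -- set up the target interval
  set C := Real.log x - Real.log θ with hC_def
  set ε := (Real.log b - Real.log a) / (-u) / 3 with hε_def
  have hlab : Real.log a < Real.log b := Real.log_lt_log ha hab
  have hεpos : 0 < ε := by
    apply div_pos (div_pos (by linarith) (by linarith)) (by norm_num)
  set p := (C - Real.log a) / u + ε with hp_def
  set q := (C - Real.log b) / u - ε with hq_def
  have h3ε : (C - Real.log b) / u - (C - Real.log a) / u = 3 * ε := by
    rw [hε_def]
    field_simp
    ring
  have hpq : p < q := by rw [hp_def, hq_def]; linarith
  -- eventually the log-error is small
  have hDlim : Tendsto (fun l => Real.log θ - Real.log (slope H 0 (T l))) atTop (nhds 0) := by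
    simpa using (tendsto_const_nhds :
      Tendsto (fun _ : ℕ => Real.log θ) atTop (nhds (Real.log θ))).sub hlogR
  have hεu : 0 < ε * (-u) := mul_pos hεpos (by linarith)
  obtain ⟨N₀, hN₀⟩ := eventually_atTop.1
    ((by simpa using hDlim.abs : Tendsto (fun l => |Real.log θ - Real.log (slope H 0 (T l))|)
      atTop (nhds 0)).eventually_lt_const hεu)
  -- key claim: membership holds whenever the diophantine condition does
  have hmem_of : ∀ K L : ℕ, N₀ ≤ L → p ≤ (K:ℝ) - (L:ℝ) * γ → (K:ℝ) - (L:ℝ) * γ ≤ q →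
      β ^ L * x ∈ H '' Set.Icc (α ^ K * a) (α ^ K * b) := by
    intro K L hLN hKL1 hKL2
    have hD := hN₀ L hLN
    have hDabs := abs_lt.1 hD
    have hlog1 : Real.log (α ^ K * a) = (K:ℝ) * u + Real.log a := by
      rw [Real.log_mul (by positivity) ha.ne', Real.log_pow, hu_def]
    have hlog2 : Real.log (α ^ K * b) = (K:ℝ) * u + Real.log b := by
      rw [Real.log_mul (by positivity) (ha.trans hab).ne', Real.log_pow, hu_def]
    have hKLu : (((K:ℝ) - (L:ℝ) * γ)) * u = (K:ℝ) * u - (L:ℝ) * v := by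
      rw [sub_mul, mul_assoc, hγu]
    have hpu : p * u = (C - Real.log a) + ε * u := by
      rw [hp_def, add_mul, div_mul_cancel₀ _ hune]
    have hqu : q * u = (C - Real.log b) - ε * u := by
      rw [hq_def, sub_mul, div_mul_cancel₀ _ hune]
    have hmul1 := mul_le_mul_of_nonpos_right hKL1 hu.le
    have hmul2 := mul_le_mul_of_nonpos_right hKL2 hu.le
    have hring : -(ε * (-u)) = ε * u := by ring
    have hineq1 : Real.log (α ^ K * a) ≤ Real.log (T L) := by
      rw [hlog1, hlogT L]
      have hd1 := hDabs.1
      rw [hring] at hd1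
      have hC : C = Real.log x - Real.log θ := hC_def
      linarith [hKLu, hpu, hmul1]
    have hineq2 : Real.log (T L) ≤ Real.log (α ^ K * b) := by
      rw [hlog2, hlogT L]
      have hd2 := hDabs.2
      have hC : C = Real.log x - Real.log θ := hC_def
      linarith [hKLu, hqu, hmul2]
    refine ⟨T L, ⟨?_, ?_⟩, hTeq L⟩
    · calc α ^ K * a = Real.exp (Real.log (α ^ K * a)) :=
            (Real.exp_log (by positivity)).symm
        _ ≤ Real.exp (Real.log (T L)) := Real.exp_le_exp.2 hineq1
        _ = T L := Real.exp_log (hTpos L)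
    · calc T L = Real.exp (Real.log (T L)) := (Real.exp_log (hTpos L)).symm
        _ ≤ Real.exp (Real.log (α ^ K * b)) := Real.exp_le_exp.2 hineq2
        _ = α ^ K * b := Real.exp_log (by have hb0 : 0 < b := ha.trans hab; positivity)
  -- recursive construction of the pairs
  have key : ∀ N : ℕ, ∃ kl : ℕ × ℕ, (max N N₀) + 1 ≤ kl.2 ∧ 1 ≤ kl.1 ∧
      p ≤ (kl.1:ℝ) - (kl.2:ℝ) * γ ∧ (kl.1:ℝ) - (kl.2:ℝ) * γ ≤ q := by
    intro N
    obtain ⟨k, l, h1, h2, h3, h4⟩ := aux_step γ hirr hγpos p q hpq (max N N₀ + 1)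
    exact ⟨(k, l), h1, h2, h3, h4⟩
  choose F hF1 hF2 hF3 hF4 using key
  let g : ℕ → ℕ × ℕ := fun n => Nat.rec (F 0) (fun _ ih => F ih.2) n
  have hgs : ∀ n, g (n+1) = F (g n).2 := fun n => rfl
  have hgF : ∀ n, ∃ m, g n = F m := by
    intro n
    cases n with
    | zero => exact ⟨0, rfl⟩
    | succ n => exact ⟨(g n).2, rfl⟩
  have hlmono : StrictMono (fun n => (g n).2) := by
    apply strictMono_nat_of_lt_succ
    intro n
    have h := hF1 (g n).2
    rw [hgs n]
    omega
  have hprops : ∀ n, N₀ ≤ (g n).2 ∧ 1 ≤ (g n).2 ∧ 1 ≤ (g n).1 := by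
    intro n
    obtain ⟨m, hm⟩ := hgF n
    rw [hm]
    have h1 := hF1 m
    have h2 := hF2 m
    omega
  refine ⟨fun n => (g n).1, fun n => (g n).2, ?_, ?_, ?_, ?_⟩
  · intro n
    exact ⟨(hprops n).2.2, (hprops n).2.1⟩
  · intro n1 n2 h
    have h2 : (g n1).2 = (g n2).2 := congrArg Prod.snd h
    exact hlmono.injective h2
  · intro n
    obtain ⟨m, hm⟩ := hgF n
    exact hmem_of (g n).1 (g n).2 (hprops n).1 (by rw [hm]; exact hF3 m)
      (by rw [hm]; exact hF4 m)
  · have hl_atTop : Tendsto (fun n => ((g n).2 : ℝ)) atTop atTop :=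
      tendsto_natCast_atTop_atTop.comp hlmono.tendsto_atTop
    have hbound : ∀ n, γ + p / ((g n).2:ℝ) ≤ ((g n).1:ℝ) / ((g n).2:ℝ) ∧
        ((g n).1:ℝ) / ((g n).2:ℝ) ≤ γ + q / ((g n).2:ℝ) := by
      intro n
      have hL : (0:ℝ) < ((g n).2:ℝ) := by
        have := (hprops n).2.1
        exact_mod_cast Nat.lt_of_lt_of_le Nat.zero_lt_one this
      obtain ⟨m, hm⟩ := hgF n
      have h3 : p ≤ ((g n).1:ℝ) - ((g n).2:ℝ) * γ := by rw [hm]; exact hF3 m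
      have h4 : ((g n).1:ℝ) - ((g n).2:ℝ) * γ ≤ q := by rw [hm]; exact hF4 m
      constructor
      · have h5 : p / ((g n).2:ℝ) ≤ (((g n).1:ℝ) - ((g n).2:ℝ) * γ) / ((g n).2:ℝ) := by
          gcongr
        have h6 : (((g n).1:ℝ) - ((g n).2:ℝ) * γ) / ((g n).2:ℝ)
            = ((g n).1:ℝ) / ((g n).2:ℝ) - γ := by field_simp
        linarith
      · have h5 : (((g n).1:ℝ) - ((g n).2:ℝ) * γ) / ((g n).2:ℝ) ≤ q / ((g n).2:ℝ) := by
          gcongr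
        have h6 : (((g n).1:ℝ) - ((g n).2:ℝ) * γ) / ((g n).2:ℝ)
            = ((g n).1:ℝ) / ((g n).2:ℝ) - γ := by field_simp
        linarith
    refine tendsto_of_tendsto_of_tendsto_of_le_of_le ?_ ?_
      (fun n => (hbound n).1) (fun n => (hbound n).2)
    · simpa using (tendsto_const_nhds (x := γ)).add
        ((tendsto_const_nhds (x := p)).div_atTop hl_atTop)
    · simpa using (tendsto_const_nhds (x := γ)).add
        ((tendsto_const_nhds (x := q)).div_atTop hl_atTop)
end

section
/- Let g be a C² NS-map on [0,1] and fix d ∈ (0,1). Set G = (max_{t ∈ [0,d]} |g''(t)|) / (min_{t ∈ [0,d]} g'(t)). Then for every positive integer l and all points x, y ∈ [g(d), d], the derivatives of the l-th iterate satisfy (g^l)'(x) / (g^l)'(y) ≥ e^{−G·d}. -/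
/-!
By the chain rule `(g^l)'(x) = ∏_{i<l} g'(g^i x)`, so the logarithm of the ratio is
`∑_{i<l} (log g'(g^i x) - log g'(g^i y))`. Since `(log g')' = g''/g'`, the function `log g'` is
`G`-Lipschitz on `[0, d]`, and since `g` is increasing, `g^i x` and `g^i y` lie in the same
fundamental domain `[g^{i+1} d, g^i d]`. The sum is therefore at least
`-G ∑_{i<l} (g^i d - g^{i+1} d) = -G (d - g^l d) ≥ -G d`.
-/

open Set

/-- The distortion constant `G = (max_{t ∈ [0,d]} |g''(t)|) / (min_{t ∈ [0,d]} g'(t))`. -/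
noncomputable def distortionConst (g : ℝ → ℝ) (d : ℝ) : ℝ :=
  sSup ((fun t => |derivWithin (derivWithin g (Set.Icc 0 1)) (Set.Icc 0 1) t| ) ''
      Set.Icc 0 d) /
    sInf ((fun t => derivWithin g (Set.Icc 0 1) t) '' Set.Icc 0 d)

theorem hasDerivWithinAt_iterate_of_mapsTo {𝕜 : Type*} [NontriviallyNormedField 𝕜]
    {f f' : 𝕜 → 𝕜} {s : Set 𝕜} (hs : MapsTo f s s)
    (hf : ∀ x ∈ s, HasDerivWithinAt f (f' x) s x) (n : ℕ) {x : 𝕜} (hx : x ∈ s) :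
    HasDerivWithinAt f^[n] (∏ i ∈ Finset.range n, f' (f^[i] x)) s x := by
  induction n with
  | zero => simpa using hasDerivWithinAt_id x s
  | succ n ih =>
    rw [Function.iterate_succ', Finset.prod_range_succ, mul_comm]
    exact (hf _ (hs.iterate n hx)).comp x ih (hs.iterate n)

theorem MonotoneOn.iterate_of_mapsTo {α : Type*} [Preorder α] {f : α → α} {s : Set α}
    (hf : MonotoneOn f s) (hs : MapsTo f s s) (n : ℕ) : MonotoneOn f^[n] s := by
  induction n with
  | zero => exact monotone_id.monotoneOn s
  | succ n ih => exact Function.iterate_succ f n ▸ ih.comp hf hs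

theorem MonotoneOn.iterate_mem_Icc_iterate {α : Type*} [Preorder α] {f : α → α} {s : Set α}
    (hf : MonotoneOn f s) (hs : MapsTo f s s) {d x : α} (hd : d ∈ s) (hx : x ∈ s)
    (hxd : x ∈ Icc (f d) d) (i : ℕ) : f^[i] x ∈ Icc (f^[i + 1] d) (f^[i] d) := by
  rw [Function.iterate_succ_apply]
  have hfi := hf.iterate_of_mapsTo hs i
  exact ⟨hfi (hs hd) hx hxd.1, hfi hx hd hxd.2⟩

theorem neg_mul_sub_le_sum_of_abs_le {u v a c : ℕ → ℝ} {G : ℝ} (hG : 0 ≤ G)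
    (hu : ∀ i, u i ∈ Icc (a (i + 1)) (a i)) (hv : ∀ i, v i ∈ Icc (a (i + 1)) (a i))
    (hc : ∀ i, |c i| ≤ G * |u i - v i|) (l : ℕ) :
    -(G * (a 0 - a l)) ≤ ∑ i ∈ Finset.range l, c i := by
  calc -(G * (a 0 - a l)) = ∑ i ∈ Finset.range l, -(G * (a i - a (i + 1))) := by
        rw [Finset.sum_neg_distrib, ← Finset.mul_sum, Finset.sum_range_sub']
    _ ≤ ∑ i ∈ Finset.range l, c i := by
        refine Finset.sum_le_sum fun i _ => ?_
        have hdist : |u i - v i| ≤ a i - a (i + 1) := Real.dist_le_of_mem_Icc (hu i) (hv i)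
        nlinarith [neg_abs_le (c i), hc i]

theorem ContinuousOn.pos_of_forall_ne_zero {f : ℝ → ℝ} {a b : ℝ}
    (hf : ContinuousOn f (Icc a b)) (ha : 0 < f a) (h0 : ∀ t ∈ Icc a b, f t ≠ 0)
    {t : ℝ} (ht : t ∈ Icc a b) : 0 < f t := by
  by_contra! hft
  obtain ⟨s, hs, hs0⟩ := intermediate_value_Icc' ht.1
    (hf.mono (Icc_subset_Icc le_rfl ht.2)) ⟨hft, ha.le⟩
  exact h0 s ⟨hs.1, hs.2.trans ht.2⟩ hs0

theorem abs_log_sub_log_le_of_hasDerivWithinAt {f f' : ℝ → ℝ} {s : Set ℝ} {m S : ℝ}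
    (hs : Convex ℝ s) (hf : ∀ t ∈ s, HasDerivWithinAt f (f' t) s t) (hm : 0 < m)
    (hfm : ∀ t ∈ s, m ≤ f t) (hf'S : ∀ t ∈ s, |f' t| ≤ S) {a b : ℝ} (ha : a ∈ s)
    (hb : b ∈ s) : |Real.log (f a) - Real.log (f b)| ≤ S / m * |a - b| := by
  have hfpos : ∀ t ∈ s, 0 < f t := fun t ht => hm.trans_le (hfm t ht)
  simpa only [Real.norm_eq_abs] using hs.norm_image_sub_le_of_norm_hasDerivWithin_le
    (fun t ht => (hf t ht).log (hfpos t ht).ne')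
    (fun t ht => by
      rw [Real.norm_eq_abs, abs_div, abs_of_pos (hfpos t ht)]
      exact div_le_div₀ ((abs_nonneg _).trans (hf'S t ht)) (hf'S t ht) hm (hfm t ht))
    hb ha

theorem IsNSMap.derivWithin_pos_s9 {g : ℝ → ℝ} (hg : IsNSMap g) (hg1 : ContDiffOn ℝ 1 g (Icc 0 1))
    {t : ℝ} (ht : t ∈ Icc (0 : ℝ) 1) : 0 < derivWithin g (Icc 0 1) t := by
  obtain ⟨-, -, -, hne, h0, -⟩ := hg
  exact (hg1.continuousOn_derivWithin (uniqueDiffOn_Icc one_pos) le_rfl).pos_of_forall_ne_zero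
    h0 hne ht

theorem IsNSMap.monotoneOn {g : ℝ → ℝ} (hg : IsNSMap g) (hg1 : ContDiffOn ℝ 1 g (Icc 0 1)) :
    MonotoneOn g (Icc 0 1) :=
  monotoneOn_of_hasDerivWithinAt_nonneg (convex_Icc 0 1) hg1.continuousOn
    (fun t ht => ((hg1.differentiableOn one_ne_zero t (interior_subset ht)).hasDerivWithinAt).mono
      interior_subset)
    (fun _ ht => (hg.derivWithin_pos_s9 hg1 (interior_subset ht)).le)

theorem IsNSMap.mapsTo_Icc_zero {g : ℝ → ℝ} (hg : IsNSMap g) (hg1 : ContDiffOn ℝ 1 g (Icc 0 1))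
    {d : ℝ} (hd : d ∈ Ico (0 : ℝ) 1) : MapsTo g (Icc 0 d) (Icc 0 d) := by
  have hI : Icc 0 d ⊆ Icc (0 : ℝ) 1 := Icc_subset_Icc le_rfl hd.2.le
  have hmono := hg.monotoneOn hg1
  obtain ⟨-, hg0, -, -, -, -, -, hlt⟩ := hg
  intro t ht
  refine ⟨hg0 ▸ hmono (hI ⟨le_rfl, hd.1⟩) (hI ht) ht.1, le_trans ?_ ht.2⟩
  rcases ht.1.eq_or_lt with rfl | ht0
  · exact hg0.le
  · exact (hlt t ⟨ht0, ht.2.trans_lt hd.2⟩).le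

theorem exp_le_prod_div_prod_of_le_sum_log_sub {p q : ℕ → ℝ} (hp : ∀ i, 0 < p i)
    (hq : ∀ i, 0 < q i) {l : ℕ} {B : ℝ}
    (hB : B ≤ ∑ i ∈ Finset.range l, (Real.log (p i) - Real.log (q i))) :
    Real.exp B ≤ (∏ i ∈ Finset.range l, p i) / ∏ i ∈ Finset.range l, q i := by
  have hP := Finset.prod_pos fun i (_ : i ∈ Finset.range l) => hp i
  have hQ := Finset.prod_pos fun i (_ : i ∈ Finset.range l) => hq i
  rwa [← Real.exp_log (div_pos hP hQ), Real.exp_le_exp, Real.log_div hP.ne' hQ.ne',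
    Real.log_prod fun i _ => (hp i).ne', Real.log_prod fun i _ => (hq i).ne',
    ← Finset.sum_sub_distrib]

theorem distortionConst_nonneg {g : ℝ → ℝ} {d : ℝ}
    (hpos : ∀ t ∈ Icc 0 d, 0 ≤ derivWithin g (Icc 0 1) t) : 0 ≤ distortionConst g d :=
  div_nonneg (Real.sSup_nonneg (by rintro _ ⟨t, -, rfl⟩; exact abs_nonneg _))
    (Real.sInf_nonneg (by rintro _ ⟨t, ht, rfl⟩; exact hpos t ht))

theorem abs_log_derivWithin_sub_le_distortionConst {g : ℝ → ℝ} {d : ℝ}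
    (hg2 : ContDiffOn ℝ 2 g (Icc 0 1)) (hpos : ∀ t ∈ Icc 0 d, 0 < derivWithin g (Icc 0 1) t)
    (hd : d ≤ 1) {a b : ℝ} (ha : a ∈ Icc 0 d) (hb : b ∈ Icc 0 d) :
    |Real.log (derivWithin g (Icc 0 1) a) - Real.log (derivWithin g (Icc 0 1) b)| ≤
      distortionConst g d * |a - b| := by
  have hu : UniqueDiffOn ℝ (Icc (0 : ℝ) 1) := uniqueDiffOn_Icc one_pos
  have hsub : Icc 0 d ⊆ Icc (0 : ℝ) 1 := Icc_subset_Icc le_rfl hd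
  have hg' : ContDiffOn ℝ 1 (derivWithin g (Icc 0 1)) (Icc 0 1) := hg2.derivWithin hu le_rfl
  have hK := isCompact_Icc.image_of_continuousOn
    ((hg'.continuousOn_derivWithin hu le_rfl).mono hsub).abs
  have hM := isCompact_Icc.image_of_continuousOn (hg'.continuousOn.mono hsub)
  obtain ⟨t₀, ht₀, hmin⟩ := hM.sInf_mem ⟨_, mem_image_of_mem _ ha⟩
  exact abs_log_sub_log_le_of_hasDerivWithinAt (convex_Icc 0 d)
    (fun t ht => ((hg'.differentiableOn one_ne_zero t (hsub ht)).hasDerivWithinAt).mono hsub)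
    (hmin ▸ hpos t₀ ht₀) (fun t ht => csInf_le hM.bddBelow (mem_image_of_mem _ ht))
    (fun t ht => le_csSup hK.bddAbove (mem_image_of_mem _ ht)) ha hb

/-- Let `g` be a C² NS-map on `[0,1]` and fix `d ∈ (0,1)`. Set
`G = (max_{t ∈ [0,d]} |g''(t)|) / (min_{t ∈ [0,d]} g'(t))`. Then for every positive
integer `l` and all points `x, y ∈ [g(d), d]`, the derivatives of the `l`-th iterate
satisfy `(g^l)'(x) / (g^l)'(y) ≥ e^{−G·d}`. -/
theorem iterate_derivative_distortion
    (g : ℝ → ℝ) (hg2 : ContDiffOn ℝ 2 g (Set.Icc 0 1)) (hg : IsNSMap g)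
    (d : ℝ) (hd : d ∈ Set.Ioo (0 : ℝ) 1) :
    ∀ l : ℕ, 0 < l → ∀ x ∈ Set.Icc (g d) d, ∀ y ∈ Set.Icc (g d) d,
      derivWithin (g^[l]) (Set.Icc 0 1) x / derivWithin (g^[l]) (Set.Icc 0 1) y ≥
        Real.exp (-(distortionConst g d) * d) := by
  set I := Icc (0 : ℝ) 1
  have hg1 : ContDiffOn ℝ 1 g I := hg2.of_le one_le_two
  have hsub : Icc 0 d ⊆ I := Icc_subset_Icc le_rfl hd.2.le
  have hmaps : MapsTo g (Icc 0 d) (Icc 0 d) := hg.mapsTo_Icc_zero hg1 ⟨hd.1.le, hd.2⟩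
  have hdom : Icc (g d) d ⊆ Icc 0 d := fun z hz => ⟨(hmaps ⟨hd.1.le, le_rfl⟩).1.trans hz.1, hz.2⟩
  have horbit : ∀ z ∈ Icc (g d) d, ∀ i, g^[i] z ∈ Icc (g^[i + 1] d) (g^[i] d) := fun z hz =>
    ((hg.monotoneOn hg1).mono hsub).iterate_mem_Icc_iterate hmaps ⟨hd.1.le, le_rfl⟩ (hdom hz) hz
  have hfactor_pos : ∀ z ∈ Icc (g d) d, ∀ i, 0 < derivWithin g I (g^[i] z) := fun z hz i =>
    hg.derivWithin_pos_s9 hg1 (hsub (hmaps.iterate i (hdom hz)))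
  have hderiv : ∀ l, ∀ z ∈ Icc (g d) d,
      derivWithin (g^[l]) I z = ∏ i ∈ Finset.range l, derivWithin g I (g^[i] z) := fun l z hz =>
    (hasDerivWithinAt_iterate_of_mapsTo hg.1.mapsTo
      (fun t ht => (hg1.differentiableOn one_ne_zero t ht).hasDerivWithinAt) l
      (hsub (hdom hz))).derivWithin (uniqueDiffOn_Icc one_pos z (hsub (hdom hz)))
  intro l _ x hx y hy
  rw [hderiv l x hx, hderiv l y hy, ge_iff_le]
  refine exp_le_prod_div_prod_of_le_sum_log_sub (hfactor_pos x hx) (hfactor_pos y hy) ?_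
  have hG : 0 ≤ distortionConst g d :=
    distortionConst_nonneg fun t ht => (hg.derivWithin_pos_s9 hg1 (hsub ht)).le
  calc -distortionConst g d * d ≤ -(distortionConst g d * (d - g^[l] d)) := by
        nlinarith [(hmaps.iterate l ⟨hd.1.le, le_rfl⟩).1]
    _ ≤ _ := neg_mul_sub_le_sum_of_abs_le (a := fun i => g^[i] d) hG (horbit x hx) (horbit y hy)
        (fun i => abs_log_derivWithin_sub_le_distortionConst hg2
          (fun t ht => hg.derivWithin_pos_s9 hg1 (hsub ht)) hd.2.le
          (hmaps.iterate i (hdom hx)) (hmaps.iterate i (hdom hy))) l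
end

section
/- Let f be a C² diffeomorphism from a neighborhood of 0 in [0, ∞) onto its image with f(0) = 0. If f'(0) = α ≠ 1, then there exists a C¹ local diffeomorphism h from a neighborhood of 0 in [0, ∞) onto its image with h(0) = 0, h'(0) = 1, and h(f(t)) = α · h(t) for all t in a neighborhood of 0. -/
/-!
The linearization is sought in the form `h t = ∫₀ᵗ exp (u s) ds` with `u 0 = 0`. Then
`h (f t) = α h t` holds as soon as both sides have the same derivative, i.e. `u` solves the
cohomological equation `u (f t) - u t = -c t` with `c = log (f' / α)`. Because `f` is `C²`, `f'`
is Lipschitz, so `|c t| ≤ K t`; along the orbit of a map `φ` with `φ t ≤ r t`, `r < 1`, the series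
`∑ c (φⁿ t)` is then dominated by a geometric series and converges uniformly to a continuous
solution of `U = c + U ∘ φ`. For `α < 1` take `φ = f` and `u = U`; for `α > 1` take `φ = f⁻¹` and
`u = -U ∘ f⁻¹`. Finally `α > 0`, as `f ≥ 0 = f 0` and `α ≠ 0`.
-/

open Set Function Real

noncomputable def orbitSum {E : Type*} [AddCommMonoid E] [TopologicalSpace E] (c : ℝ → E)
    (φ : ℝ → ℝ) (t : ℝ) : E :=
  ∑' n : ℕ, c (φ^[n] t)

section orbitSum

variable {E : Type*} [NormedAddCommGroup E] {c : ℝ → E} {φ : ℝ → ℝ} {β K r t : ℝ}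

lemma iterate_le_pow_mul (hφ : MapsTo φ (Icc 0 β) (Icc 0 β)) (hr : 0 ≤ r)
    (hφr : ∀ t ∈ Icc 0 β, φ t ≤ r * t) (ht : t ∈ Icc 0 β) (n : ℕ) : φ^[n] t ≤ r ^ n * t := by
  induction n with
  | zero => simp
  | succ n ih =>
    rw [iterate_succ_apply', pow_succ', mul_assoc]
    exact (hφr _ (hφ.iterate n ht)).trans (mul_le_mul_of_nonneg_left ih hr)

lemma norm_comp_iterate_le (hφ : MapsTo φ (Icc 0 β) (Icc 0 β)) (hr : 0 ≤ r)
    (hφr : ∀ t ∈ Icc 0 β, φ t ≤ r * t) (hK : 0 ≤ K) (hcK : ∀ t ∈ Icc 0 β, ‖c t‖ ≤ K * t)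
    (ht : t ∈ Icc 0 β) (n : ℕ) : ‖c (φ^[n] t)‖ ≤ K * β * r ^ n :=
  calc ‖c (φ^[n] t)‖ ≤ K * φ^[n] t := hcK _ (hφ.iterate n ht)
    _ ≤ K * (r ^ n * β) := by
      gcongr
      exact (iterate_le_pow_mul hφ hr hφr ht n).trans (by gcongr; exact ht.2)
    _ = K * β * r ^ n := by ring

lemma orbitSum_zero (hβ : 0 ≤ β) (hφ : MapsTo φ (Icc 0 β) (Icc 0 β))
    (hφr : ∀ t ∈ Icc 0 β, φ t ≤ r * t) (hcK : ∀ t ∈ Icc 0 β, ‖c t‖ ≤ K * t) :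
    orbitSum c φ 0 = 0 := by
  have h0 : (0 : ℝ) ∈ Icc 0 β := ⟨le_rfl, hβ⟩
  have hφ0 : φ 0 = 0 := le_antisymm (by simpa using hφr 0 h0) (hφ h0).1
  have hc0 : c 0 = 0 := norm_le_zero_iff.1 (by simpa using hcK 0 h0)
  simp [orbitSum, iterate_fixed hφ0, hc0]

variable [CompleteSpace E]

lemma orbitSum_eq_add (hφ : MapsTo φ (Icc 0 β) (Icc 0 β)) (hr0 : 0 ≤ r) (hr1 : r < 1)
    (hφr : ∀ t ∈ Icc 0 β, φ t ≤ r * t) (hK : 0 ≤ K) (hcK : ∀ t ∈ Icc 0 β, ‖c t‖ ≤ K * t)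
    (ht : t ∈ Icc 0 β) : orbitSum c φ t = c t + orbitSum c φ (φ t) := by
  have hsum : Summable fun n : ℕ => c (φ^[n] t) :=
    .of_norm_bounded ((summable_geometric_of_lt_one hr0 hr1).mul_left (K * β))
      (norm_comp_iterate_le hφ hr0 hφr hK hcK ht)
  rw [orbitSum, hsum.tsum_eq_zero_add]
  rfl

lemma continuousOn_orbitSum (hφc : ContinuousOn φ (Icc 0 β)) (hφ : MapsTo φ (Icc 0 β) (Icc 0 β))
    (hr0 : 0 ≤ r) (hr1 : r < 1) (hφr : ∀ t ∈ Icc 0 β, φ t ≤ r * t) (hK : 0 ≤ K)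
    (hc : ContinuousOn c (Icc 0 β)) (hcK : ∀ t ∈ Icc 0 β, ‖c t‖ ≤ K * t) :
    ContinuousOn (orbitSum c φ) (Icc 0 β) :=
  continuousOn_tsum (fun n => hc.comp (hφc.iterate hφ n) (hφ.iterate n))
    ((summable_geometric_of_lt_one hr0 hr1).mul_left (K * β))
    fun n _ ht => norm_comp_iterate_le hφ hr0 hφr hK hcK ht n

end orbitSum

theorem IsCompact.continuousOn_invFunOn {α β : Type*} [TopologicalSpace α] [Nonempty α]
    [TopologicalSpace β] [T2Space β] {f : α → β} {s : Set α} (hs : IsCompact s)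
    (hf : ContinuousOn f s) (hinj : InjOn f s) : ContinuousOn (invFunOn f s) (f '' s) := by
  refine continuousOn_iff_isClosed.2 fun t ht => ⟨f '' (t ∩ s), ?_, ?_⟩
  · exact ((hs.inter_left ht).image_of_continuousOn (hf.mono inter_subset_right)).isClosed
  ext y
  constructor
  · rintro ⟨hyt, x, hx, rfl⟩
    rw [mem_preimage, hinj.leftInvOn_invFunOn hx] at hyt
    exact ⟨⟨x, ⟨hyt, hx⟩, rfl⟩, x, hx, rfl⟩
  · rintro ⟨⟨x, ⟨hxt, hx⟩, rfl⟩, -⟩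
    exact ⟨by rwa [mem_preimage, hinj.leftInvOn_invFunOn hx], x, hx, rfl⟩

theorem ContinuousOn.exists_continuous_eqOn_Icc {α E : Type*} [LinearOrder α] [TopologicalSpace α]
    [OrderTopology α] [TopologicalSpace E] {a b : α} {V : α → E} (hab : a ≤ b)
    (hV : ContinuousOn V (Icc a b)) : ∃ u : α → E, Continuous u ∧ EqOn u V (Icc a b) :=
  ⟨fun s => V (projIcc a b hab s),
    hV.comp_continuous (continuous_subtype_val.comp continuous_projIcc) fun s =>
      (projIcc a b hab s).2,
    fun s hs => by simp [projIcc_of_mem hab hs]⟩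

theorem IsMinOn.derivWithin_Icc_left_nonneg {f : ℝ → ℝ} {a b : ℝ} (hab : a < b)
    (h : IsMinOn f (Icc a b) a) : 0 ≤ derivWithin f (Icc a b) a := by
  by_cases hd : DifferentiableWithinAt ℝ f (Icc a b) a
  · have hcone : b - a ∈ posTangentConeAt (Icc a b) a :=
      sub_mem_posTangentConeAt_of_segment_subset (segment_eq_Icc hab.le).subset
    have := h.localize.hasFDerivWithinAt_nonneg hd.hasDerivWithinAt.hasFDerivWithinAt hcone
    rw [ContinuousLinearMap.toSpanSingleton_apply, smul_eq_mul] at this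
    exact nonneg_of_mul_nonneg_right this (sub_pos.2 hab)
  · rw [derivWithin_zero_of_not_differentiableWithinAt hd]

theorem Convex.abs_sub_sub_mul_le {f f' : ℝ → ℝ} {s : Set ℝ} {α η x y : ℝ} (hs : Convex ℝ s)
    (hfd : ∀ t ∈ s, HasDerivWithinAt f (f' t) s t) (hη : ∀ t ∈ s, |f' t - α| ≤ η)
    (hx : x ∈ s) (hy : y ∈ s) : |f y - f x - α * (y - x)| ≤ η * |y - x| := by
  have := hs.norm_image_sub_le_of_norm_hasDerivWithin_le
    (fun t ht => (hfd t ht).sub ((hasDerivWithinAt_id t s).const_mul α)) (by simpa using hη) hx hy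
  simp only [id, Real.norm_eq_abs] at this
  convert this using 2
  simp only [Pi.sub_apply]
  ring

theorem abs_log_le_two_mul_abs_sub_one {y : ℝ} (hy : 1 / 2 ≤ y) : |log y| ≤ 2 * |y - 1| := by
  have hy0 : 0 < y := by linarith
  refine abs_le.2 ⟨le_trans ?_ (one_sub_inv_le_log_of_pos hy0), ?_⟩
  · rcases le_total 1 y with h | h
    · linarith [inv_le_one_of_one_le₀ h, abs_nonneg (y - 1)]
    · have : y⁻¹ ≤ 3 - 2 * y := by
        rw [inv_le_iff_one_le_mul₀ hy0]
        nlinarith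
      rw [abs_of_nonpos (by linarith)]
      linarith
  · linarith [log_le_sub_one_of_pos hy0, le_abs_self (y - 1), abs_nonneg (y - 1)]

theorem abs_log_div_le {x α : ℝ} (hα : 0 < α) (hx : α / 2 ≤ x) :
    |log (x / α)| ≤ 2 / α * |x - α| := by
  have hxα : 1 / 2 ≤ x / α := by rw [le_div_iff₀ hα]; linarith
  calc |log (x / α)| ≤ 2 * |x / α - 1| := abs_log_le_two_mul_abs_sub_one hxα
    _ = 2 / α * |x - α| := by
      rw [div_sub_one hα.ne', abs_div, abs_of_pos hα]; ring

def IsC1Linearization (f : ℝ → ℝ) (α δ : ℝ) (h : ℝ → ℝ) : Prop :=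
  ContDiffOn ℝ 1 h (Icc 0 δ) ∧ InjOn h (Icc 0 δ) ∧
    (∀ t ∈ Icc 0 δ, derivWithin h (Icc 0 δ) t ≠ 0) ∧ h 0 = 0 ∧
    derivWithin h (Icc 0 δ) 0 = 1 ∧ ∀ t ∈ Icc 0 δ, h (f t) = α * h t

section

variable {f f' : ℝ → ℝ} {α b η K : ℝ}

theorem abs_sub_mul_le_of_abs_deriv_sub_le (hf0 : f 0 = 0)
    (hfd : ∀ t ∈ Icc 0 b, HasDerivWithinAt f (f' t) (Icc 0 b) t)
    (hη : ∀ s ∈ Icc 0 b, |f' s - α| ≤ η) {t : ℝ} (ht : t ∈ Icc 0 b) : |f t - α * t| ≤ η * t := by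
  simpa [hf0, abs_of_nonneg ht.1] using
    (convex_Icc 0 b).abs_sub_sub_mul_le hfd hη ⟨le_rfl, ht.1.trans ht.2⟩ ht

theorem exists_isC1Linearization_of_cohomological {u : ℝ → ℝ} {δ : ℝ} (hδ : 0 < δ) (hα : 0 < α)
    (hf0 : f 0 = 0) (hfd : ∀ t ∈ Icc 0 δ, HasDerivWithinAt f (f' t) (Icc 0 δ) t)
    (hf' : ∀ t ∈ Icc 0 δ, 0 < f' t) (hu : Continuous u) (hu0 : u 0 = 0)
    (hrel : ∀ t ∈ Icc 0 δ, u (f t) = u t - log (f' t / α)) :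
    ∃ h, IsC1Linearization f α δ h := by
  have hE : Continuous fun s => exp (u s) := continuous_exp.comp hu
  set h : ℝ → ℝ := fun t => ∫ s in (0 : ℝ)..t, exp (u s)
  have hh t : HasDerivAt h (exp (u t)) t := (hE.integral_hasStrictDerivAt 0 t).hasDerivAt
  have hUD := uniqueDiffOn_Icc hδ
  have hhδ : ∀ t ∈ Icc 0 δ, derivWithin h (Icc 0 δ) t = exp (u t) := fun t ht =>
    (hh t).hasDerivWithinAt.derivWithin (hUD t ht)
  have hconj : ∀ t ∈ Icc 0 δ, HasDerivWithinAt (fun t => h (f t)) (α * exp (u t)) (Icc 0 δ) t := by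
    intro t ht
    have hchain : exp (u (f t)) * f' t = α * exp (u t) := by
      rw [hrel t ht, exp_sub, exp_log (div_pos (hf' t ht) hα)]
      field_simp [(hf' t ht).ne']
    exact hchain ▸ (hh (f t)).comp_hasDerivWithinAt t (hfd t ht)
  have hαh : ∀ t ∈ Icc 0 δ, HasDerivWithinAt (fun t => α * h t) (α * exp (u t)) (Icc 0 δ) t :=
    fun t _ => (hh t).hasDerivWithinAt.const_mul α
  refine ⟨h, ?_, ?_, fun t ht => hhδ t ht ▸ (exp_pos _).ne', by simp [h], by
    simp [hhδ 0 ⟨le_rfl, hδ.le⟩, hu0], ?_⟩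
  · have hderiv : deriv h = fun s => exp (u s) := funext fun t => (hh t).deriv
    exact (contDiff_one_iff_deriv.2 ⟨fun t => (hh t).differentiableAt, hderiv ▸ hE⟩).contDiffOn
  · exact (strictMono_of_deriv_pos fun t => (hh t).deriv ▸ exp_pos _).injective.injOn
  · refine eq_of_derivWithin_eq (fun t ht => (hconj t ht).differentiableWithinAt)
      (fun t ht => (hαh t ht).differentiableWithinAt) (fun t ht => ?_) (by simp [h, hf0])
    have ht' := Ico_subset_Icc_self ht
    rw [(hconj t ht').derivWithin (hUD t ht'), (hαh t ht').derivWithin (hUD t ht')]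

theorem norm_log_deriv_div_le (hα : 0 < α) (hK : ∀ s ∈ Icc 0 b, |f' s - α| ≤ K * s)
    (hf'α : ∀ s ∈ Icc 0 b, α / 2 ≤ f' s) : ∀ s ∈ Icc 0 b, ‖log (f' s / α)‖ ≤ 2 / α * K * s := by
  intro s hs
  rw [Real.norm_eq_abs, mul_assoc]
  exact (abs_log_div_le hα (hf'α s hs)).trans (by gcongr; exact hK s hs)

theorem exists_cohomological_solution_of_lt_one (hb : 0 < b) (hα : 0 < α) (hf0 : f 0 = 0)
    (hfd : ∀ t ∈ Icc 0 b, HasDerivWithinAt f (f' t) (Icc 0 b) t)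
    (hf'c : ContinuousOn f' (Icc 0 b)) (hK0 : 0 ≤ K) (hK : ∀ s ∈ Icc 0 b, |f' s - α| ≤ K * s)
    (hη : ∀ s ∈ Icc 0 b, |f' s - α| ≤ η) (hηα : η ≤ α / 2) (hη1 : α + η < 1) :
    ∃ δ ∈ Ioc 0 b, ∃ u : ℝ → ℝ, Continuous u ∧ u 0 = 0 ∧
      ∀ t ∈ Icc 0 δ, u (f t) = u t - log (f' t / α) := by
  have hlin t (ht : t ∈ Icc 0 b) := abs_le.1 (abs_sub_mul_le_of_abs_deriv_sub_le hf0 hfd hη ht)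
  have hf'α : ∀ s ∈ Icc 0 b, α / 2 ≤ f' s := fun s hs => by linarith [(abs_le.1 (hη s hs)).1]
  have hr0 : 0 ≤ α + η := by linarith [(abs_nonneg _).trans (hη 0 ⟨le_rfl, hb.le⟩)]
  have hfr : ∀ t ∈ Icc 0 b, f t ≤ (α + η) * t := fun t ht => by linarith [(hlin t ht).2]
  have hmaps : MapsTo f (Icc 0 b) (Icc 0 b) := fun t ht =>
    ⟨by nlinarith [(hlin t ht).1, ht.1], by nlinarith [hfr t ht, ht.1, ht.2]⟩
  have hc : ContinuousOn (fun s => log (f' s / α)) (Icc 0 b) :=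
    (hf'c.div_const α).log fun s hs => (div_pos (by linarith [hf'α s hs]) hα).ne'
  have hcK := norm_log_deriv_div_le hα hK hf'α
  obtain ⟨u, hu, hUu⟩ := (continuousOn_orbitSum (fun t ht => (hfd t ht).continuousWithinAt) hmaps
    hr0 hη1 hfr (by positivity) hc hcK).exists_continuous_eqOn_Icc hb.le
  refine ⟨b, ⟨hb, le_rfl⟩, u, hu, ?_, fun t ht => ?_⟩
  · rw [hUu ⟨le_rfl, hb.le⟩, orbitSum_zero hb.le hmaps hfr hcK]
  · rw [hUu (hmaps ht), hUu ht, orbitSum_eq_add hmaps hr0 hη1 hfr (by positivity) hcK ht]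
    ring

theorem exists_cohomological_solution_of_one_lt (hb : 0 < b) (hα : 0 < α) (hf0 : f 0 = 0)
    (hfd : ∀ t ∈ Icc 0 b, HasDerivWithinAt f (f' t) (Icc 0 b) t)
    (hf'c : ContinuousOn f' (Icc 0 b)) (hK0 : 0 ≤ K) (hK : ∀ s ∈ Icc 0 b, |f' s - α| ≤ K * s)
    (hη : ∀ s ∈ Icc 0 b, |f' s - α| ≤ η) (hηα : η ≤ α / 2) (hη1 : 1 < α - η) :
    ∃ δ ∈ Ioc 0 b, ∃ u : ℝ → ℝ, Continuous u ∧ u 0 = 0 ∧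
      ∀ t ∈ Icc 0 δ, u (f t) = u t - log (f' t / α) := by
  have hlin t (ht : t ∈ Icc 0 b) := abs_le.1 (abs_sub_mul_le_of_abs_deriv_sub_le hf0 hfd hη ht)
  have hf'α : ∀ s ∈ Icc 0 b, α / 2 ≤ f' s := fun s hs => by linarith [(abs_le.1 (hη s hs)).1]
  have hfc : ContinuousOn f (Icc 0 b) := fun t ht => (hfd t ht).continuousWithinAt
  have hmono : StrictMonoOn f (Icc 0 b) := by
    intro x hx y hy hxy
    have := abs_le.1 ((convex_Icc 0 b).abs_sub_sub_mul_le hfd hη hx hy)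
    rw [abs_of_pos (sub_pos.2 hxy)] at this
    nlinarith [this.1]
  have hb0 : b ∈ Icc 0 b := ⟨hb.le, le_rfl⟩
  have hsurj : Icc 0 b ⊆ f '' Icc 0 b :=
    (Icc_subset_Icc_right (by nlinarith [(hlin b hb0).1])).trans
      (hf0 ▸ intermediate_value_Icc hb.le hfc)
  set g := invFunOn f (Icc 0 b)
  have hgc : ContinuousOn g (Icc 0 b) :=
    (isCompact_Icc.continuousOn_invFunOn hfc hmono.injOn).mono hsurj
  have hg : MapsTo g (Icc 0 b) (Icc 0 b) := fun y hy => invFunOn_mem (hsurj hy)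
  have hfg : ∀ y ∈ Icc 0 b, f (g y) = y := fun y hy => invFunOn_eq (hsurj hy)
  have hgf : ∀ t ∈ Icc 0 b, g (f t) = t := fun t ht => hmono.injOn.leftInvOn_invFunOn ht
  have hgr : ∀ y ∈ Icc 0 b, g y ≤ (α - η)⁻¹ * y := fun y hy => by
    rw [inv_mul_eq_div, le_div_iff₀ (by linarith)]
    linarith [hfg y hy ▸ (hlin _ (hg hy)).1]
  have hr0 : 0 ≤ (α - η)⁻¹ := inv_nonneg.2 (by linarith)
  have hr1 : (α - η)⁻¹ < 1 := inv_lt_one_of_one_lt₀ hη1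
  have hc : ContinuousOn (fun s => log (f' s / α)) (Icc 0 b) :=
    (hf'c.div_const α).log fun s hs => (div_pos (by linarith [hf'α s hs]) hα).ne'
  have hcK := norm_log_deriv_div_le hα hK hf'α
  obtain ⟨u, hu, hUu⟩ := ((continuousOn_orbitSum hgc hg hr0 hr1 hgr (by positivity) hc
    hcK).comp hgc hg).neg.exists_continuous_eqOn_Icc hb.le
  have hδ : 0 < g b := (hg hb0).1.lt_of_ne fun h => hb.ne (by rw [← hfg b hb0, ← h, hf0])
  have hδb : Icc 0 (g b) ⊆ Icc 0 b := Icc_subset_Icc_right (hg hb0).2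
  have hg0 : g 0 = 0 := le_antisymm (by simpa using hgr 0 ⟨le_rfl, hb.le⟩) (hg ⟨le_rfl, hb.le⟩).1
  refine ⟨g b, ⟨hδ, (hg hb0).2⟩, u, hu, ?_, fun t ht => ?_⟩
  · simp [hUu ⟨le_rfl, hb.le⟩, hg0, orbitSum_zero hb.le hg hgr hcK]
  · have hft : f t ∈ Icc 0 b :=
      ⟨hf0 ▸ hmono.monotoneOn ⟨le_rfl, hb.le⟩ (hδb ht) ht.1,
        hfg b hb0 ▸ hmono.monotoneOn (hδb ht) (hg hb0) ht.2⟩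
    rw [hUu hft, hUu (hδb ht)]
    simp only [comp_apply, Pi.neg_apply]
    rw [hgf t (hδb ht), orbitSum_eq_add hg hr0 hr1 hgr (by positivity) hcK (hδb ht)]
    ring

theorem exists_cohomological_solution (hb : 0 < b) (hα : 0 < α) (hf0 : f 0 = 0)
    (hfd : ∀ t ∈ Icc 0 b, HasDerivWithinAt f (f' t) (Icc 0 b) t)
    (hf'c : ContinuousOn f' (Icc 0 b)) (hK0 : 0 ≤ K) (hK : ∀ s ∈ Icc 0 b, |f' s - α| ≤ K * s)
    (hη : ∀ s ∈ Icc 0 b, |f' s - α| ≤ η) (hηα : η ≤ α / 2) (hη1 : η < |1 - α|) :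
    ∃ δ ∈ Ioc 0 b, ∃ u : ℝ → ℝ, Continuous u ∧ u 0 = 0 ∧
      ∀ t ∈ Icc 0 δ, u (f t) = u t - log (f' t / α) := by
  rcases lt_trichotomy α 1 with h | rfl | h
  · rw [abs_of_pos (sub_pos.2 h)] at hη1
    exact exists_cohomological_solution_of_lt_one hb hα hf0 hfd hf'c hK0 hK hη hηα (by linarith)
  · simp only [sub_self, abs_zero] at hη1
    linarith [(abs_nonneg _).trans (hη 0 ⟨le_rfl, hb.le⟩)]
  · rw [abs_of_neg (sub_neg.2 h)] at hη1
    exact exists_cohomological_solution_of_one_lt hb hα hf0 hfd hf'c hK0 hK hη hηα (by linarith)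


theorem exists_isC1Linearization (hb : 0 < b) (hα : 0 < α) (hf0 : f 0 = 0)
    (hfd : ∀ t ∈ Icc 0 b, HasDerivWithinAt f (f' t) (Icc 0 b) t)
    (hf'c : ContinuousOn f' (Icc 0 b)) (hK0 : 0 ≤ K) (hK : ∀ s ∈ Icc 0 b, |f' s - α| ≤ K * s)
    (hη : ∀ s ∈ Icc 0 b, |f' s - α| ≤ η) (hηα : η ≤ α / 2) (hη1 : η < |1 - α|) :
    ∃ δ > 0, ∃ h, IsC1Linearization f α δ h := by
  obtain ⟨δ, ⟨hδ, hδb⟩, u, hu, hu0, hrel⟩ :=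
    exists_cohomological_solution hb hα hf0 hfd hf'c hK0 hK hη hηα hη1
  have hsub : Icc 0 δ ⊆ Icc 0 b := Icc_subset_Icc_right hδb
  exact ⟨δ, hδ, exists_isC1Linearization_of_cohomological hδ hα hf0
    (fun t ht => (hfd t (hsub ht)).mono hsub)
    (fun t ht => by linarith [(abs_le.1 (hη t (hsub ht))).1]) hu hu0 hrel⟩

end

theorem sternberg_linearization_C1_general
    (f : ℝ → ℝ) (ε : ℝ) (hε : 0 < ε)
    (hf2 : ContDiffOn ℝ 2 f (Set.Icc 0 ε))
    (hf0 : f 0 = 0)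
    (hmaps : Set.MapsTo f (Set.Icc 0 ε) (Set.Ici 0))
    (hderiv : ∀ t ∈ Set.Icc (0 : ℝ) ε, derivWithin f (Set.Icc 0 ε) t ≠ 0)
    (α : ℝ) (hα : derivWithin f (Set.Icc 0 ε) 0 = α) (hα1 : α ≠ 1) :
    ∃ δ > (0 : ℝ), ∃ h : ℝ → ℝ,
      ContDiffOn ℝ 1 h (Set.Icc 0 δ) ∧
      Set.InjOn h (Set.Icc 0 δ) ∧
      (∀ t ∈ Set.Icc (0 : ℝ) δ, derivWithin h (Set.Icc 0 δ) t ≠ 0) ∧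
      h 0 = 0 ∧
      derivWithin h (Set.Icc 0 δ) 0 = 1 ∧
      ∀ t ∈ Set.Icc (0 : ℝ) δ, h (f t) = α * h t := by
  set f' := derivWithin f (Icc 0 ε)
  have hfd t (ht : t ∈ Icc 0 ε) : HasDerivWithinAt f (f' t) (Icc 0 ε) t :=
    (hf2.differentiableOn (by norm_num) t ht).hasDerivWithinAt
  have hf'1 : ContDiffOn ℝ 1 f' (Icc 0 ε) := hf2.derivWithin (uniqueDiffOn_Icc hε) le_rfl
  have hα0 : 0 < α := hα ▸ (IsMinOn.derivWithin_Icc_left_nonneg hε fun t ht => by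
    simpa [hf0] using hmaps ht).lt_of_ne (hderiv 0 ⟨le_rfl, hε.le⟩).symm
  obtain ⟨K, hK⟩ := hf'1.exists_lipschitzOnWith one_ne_zero (convex_Icc 0 ε) isCompact_Icc
  have hKs : ∀ s ∈ Icc 0 ε, |f' s - α| ≤ K * s := fun s hs => by
    simpa [← hα, Real.dist_eq, abs_of_nonneg hs.1] using hK.dist_le_mul s hs 0 ⟨le_rfl, hε.le⟩
  set η := min (α / 2) (|1 - α| / 2)
  have hη : 0 < η := lt_min (half_pos hα0) (half_pos (abs_pos.2 (sub_ne_zero.2 hα1.symm)))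
  set b := min ε (η / (K + 1))
  have hb : 0 < b := lt_min hε (div_pos hη (by positivity))
  have hbε : Icc 0 b ⊆ Icc 0 ε := Icc_subset_Icc_right (min_le_left _ _)
  have hKb : ∀ s ∈ Icc 0 b, |f' s - α| ≤ η := fun s hs => by
    have : (K + 1) * b ≤ η := (le_div_iff₀' (by positivity)).1 (min_le_right _ _)
    nlinarith [hKs s (hbε hs), hs.1, hs.2, K.2]
  exact exists_isC1Linearization hb hα0 hf0 (fun t ht => (hfd t (hbε ht)).mono hbε)
    (hf'1.continuousOn.mono hbε) K.2 (fun s hs => hKs s (hbε hs)) hKb (min_le_left _ _)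
    ((min_le_right _ _).trans_lt (half_lt_self (abs_pos.2 (sub_ne_zero.2 hα1.symm))))

/-- one-dimensional C¹ Sternberg linearization theorem: Let `f` be a C²
diffeomorphism from a neighborhood of `0` in `[0, ∞)` onto its image with `f(0) = 0`.
If `f'(0) = α ≠ 1`, then there exists a C¹ local diffeomorphism `h` from a neighborhood
of `0` in `[0, ∞)` onto its image with `h(0) = 0`, `h'(0) = 1`, and
`h(f(t)) = α · h(t)` for all `t` in a neighborhood of `0`. -/
theorem sternberg_linearization_C1
    (f : ℝ → ℝ) (ε : ℝ) (hε : 0 < ε)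
    (hf2 : ContDiffOn ℝ 2 f (Set.Icc 0 ε))
    (hf0 : f 0 = 0)
    (hinj : Set.InjOn f (Set.Icc 0 ε))
    (hmaps : Set.MapsTo f (Set.Icc 0 ε) (Set.Ici 0))
    (hderiv : ∀ t ∈ Set.Icc (0 : ℝ) ε, derivWithin f (Set.Icc 0 ε) t ≠ 0)
    (α : ℝ) (hα : derivWithin f (Set.Icc 0 ε) 0 = α) (hα1 : α ≠ 1) :
    ∃ δ > (0 : ℝ), ∃ h : ℝ → ℝ,
      ContDiffOn ℝ 1 h (Set.Icc 0 δ) ∧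
      Set.InjOn h (Set.Icc 0 δ) ∧
      (∀ t ∈ Set.Icc (0 : ℝ) δ, derivWithin h (Set.Icc 0 δ) t ≠ 0) ∧
      h 0 = 0 ∧
      derivWithin h (Set.Icc 0 δ) 0 = 1 ∧
      ∀ t ∈ Set.Icc (0 : ℝ) δ, h (f t) = α * h t :=
  sternberg_linearization_C1_general f ε hε hf2 hf0 hmaps hderiv α hα hα1
end
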